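/- arXiv:2108.06018 — 7 statements merged into one kernel-verified Lean document; each statement's English description precedes it below -/
import Mathlib

section
/- Fix t ∈ (0,1) and θ > 0, and for ε ∈ (0,1) set A = A(ε) = t(1−t)^{−1}(εθ)^{−2}. There exist constants C > 0 and ε₀ > 0 depending only on t and θ such that for all ε ∈ (0, ε₀): |Ψ_A(0,0;0,0) − 1| ≤ Cε², |Ψ_A(0,0;1,1) − (εθ)²| ≤ Cε⁴, and Σ_{k=2}^{∞} |Ψ_A(0,0;k,k)| ≤ Cε⁴. -/
open Filter Finset

/-- The q-Pochhammer symbol `(a; q)_n` for integer index `n`: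
for `n ≥ 0`, `(a;q)_n = ∏_{j=0}^{n-1} (1 - q^j a)`;
for `n = -m < 0`, `(a;q)_{-m} = ∏_{j=1}^{m} (1 - q^{-j} a)⁻¹`. -/
noncomputable def qPoch {K : Type*} [Field K] (a q : K) : ℤ → K := fun n =>
  if 0 ≤ n then ∏ j ∈ Finset.range n.toNat, (1 - q ^ j * a)
  else (∏ j ∈ Finset.range (-n).toNat, (1 - q ^ (-(j : ℤ) - 1) * a))⁻¹

/-- The infinite q-Pochhammer symbol `(a; q)_∞ = ∏_{j=0}^∞ (1 - q^j a)`. -/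
noncomputable def qPochInf {K : Type*} [Field K] [TopologicalSpace K] (a q : K) : K :=
  ∏' j : ℕ, (1 - q ^ j * a)
/-- The limiting weight `Ψ_A(i₁, h₁; i₂, h₂)`. -/
noncomputable def Psi {K : Type*} [Field K] [TopologicalSpace K] (t A : K)
    (i1 h1 i2 h2 : ℕ) : K :=
  (if (i1 : ℤ) - (h1 : ℤ) = (i2 : ℤ) - (h2 : ℤ) then (1 : K) else 0) *
  (A ^ (-(i2 : ℤ)) * t ^ (i2 * (i2 + h1)) * qPochInf (A⁻¹ * t ^ (i2 + h1 + 1)) t *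
    qPoch t t (h1 : ℤ) / (qPoch t t (i2 : ℤ) * qPoch t t (h2 : ℤ))) *
  ∑ k ∈ Finset.range (i2 + 1),
    (A * t) ^ k * qPoch (t ^ (-(i2 : ℤ))) t (k : ℤ) * qPoch (t ^ (-(i1 : ℤ))) t (k : ℤ) *
      qPoch (t ^ ((h2 : ℤ) - (i2 : ℤ) + (k : ℤ) + 1)) t ((i2 : ℤ) - (k : ℤ)) /
      qPoch t t (k : ℤ)

/-! ### Auxiliary lemmas -/

lemma qPoch_natCast' {K : Type*} [Field K] (a q : K) (n : ℕ) :
    qPoch a q (n : ℤ) = ∏ j ∈ Finset.range n, (1 - q ^ j * a) := by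
  simp [qPoch]

lemma qPoch_pos' (t : ℝ) (ht0 : 0 < t) (ht1 : t < 1) (n : ℕ) :
    0 < qPoch t t (n : ℤ) := by
  rw [qPoch_natCast']
  refine Finset.prod_pos fun j _ => ?_
  have h1 : t ^ j ≤ 1 := pow_le_one₀ ht0.le ht1.le
  nlinarith

lemma qPoch_ge' (t : ℝ) (ht0 : 0 < t) (ht1 : t < 1) (n : ℕ) :
    (1 - t) ^ n ≤ qPoch t t (n : ℤ) := by
  rw [qPoch_natCast']
  calc (1 - t) ^ n = ∏ _j ∈ Finset.range n, (1 - t) := by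
        rw [Finset.prod_const, Finset.card_range]
    _ ≤ ∏ j ∈ Finset.range n, (1 - t ^ j * t) := by
        refine Finset.prod_le_prod (fun j _ => by linarith) fun j _ => ?_
        have h1 : t ^ j ≤ 1 := pow_le_one₀ ht0.le ht1.le
        nlinarith

lemma hasProd_one_sub' (f : ℕ → ℝ) (hf : ∀ i, 0 ≤ f i) (hf1 : ∀ i, f i ≤ 1) :
    HasProd (fun j => 1 - f j) (⨅ u : Finset ℕ, ∏ j ∈ u, (1 - f j)) := by
  have hnn : ∀ u : Finset ℕ, (0:ℝ) ≤ ∏ j ∈ u, (1 - f j) :=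
    fun u => Finset.prod_nonneg fun i _ => by linarith [hf1 i]
  have hanti : Antitone (fun u : Finset ℕ => ∏ j ∈ u, (1 - f j)) := by
    intro u v huv
    simp only
    rw [← Finset.prod_sdiff (f := fun j => (1 - f j)) huv]
    have h1 : ∏ j ∈ v \ u, (1 - f j) ≤ 1 :=
      Finset.prod_le_one (fun i _ => by linarith [hf1 i]) (fun i _ => by linarith [hf i])
    nlinarith [hnn u, hnn (v \ u)]
  exact tendsto_atTop_ciInf hanti ⟨0, fun x ⟨u, hu⟩ => hu ▸ hnn u⟩

lemma qPochInf_bounds' (t a : ℝ) (ht0 : 0 < t) (ht1 : t < 1) (ha0 : 0 ≤ a) (ha1 : a ≤ 1) :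
    0 ≤ qPochInf a t ∧ qPochInf a t ≤ 1 ∧ 1 - a / (1 - t) ≤ qPochInf a t := by
  set f : ℕ → ℝ := fun j => t ^ j * a with hfdef
  have hf : ∀ i, 0 ≤ f i := fun i => mul_nonneg (pow_nonneg ht0.le i) ha0
  have hf1 : ∀ i, f i ≤ 1 := fun i => by
    calc t ^ i * a ≤ 1 * 1 := by
          apply mul_le_mul _ ha1 ha0 zero_le_one
          exact pow_le_one₀ ht0.le ht1.le
      _ = 1 := by ring
  have hp := hasProd_one_sub' f hf hf1
  have heq : qPochInf a t = ⨅ u : Finset ℕ, ∏ j ∈ u, (1 - f j) := hp.tprod_eq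
  have hnn : ∀ u : Finset ℕ, (0:ℝ) ≤ ∏ j ∈ u, (1 - f j) :=
    fun u => Finset.prod_nonneg fun i _ => by linarith [hf1 i]
  have hbdd : BddBelow (Set.range fun u : Finset ℕ => ∏ j ∈ u, (1 - f j)) :=
    ⟨0, fun x ⟨u, hu⟩ => hu ▸ hnn u⟩
  have hsum : Summable f := (summable_geometric_of_lt_one ht0.le ht1).mul_right a
  have htsum : ∑' j, f j = a / (1 - t) := by
    rw [hfdef, tsum_mul_right, tsum_geometric_of_lt_one ht0.le ht1, div_eq_inv_mul]
  refine ⟨?_, ?_, ?_⟩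
  · rw [heq]; exact le_ciInf hnn
  · rw [heq]
    calc ⨅ u : Finset ℕ, ∏ j ∈ u, (1 - f j) ≤ ∏ j ∈ ∅, (1 - f j) := ciInf_le hbdd ∅
      _ = 1 := by simp
  · rw [heq]
    refine le_ciInf fun u => ?_
    have h1 : ∑ j ∈ u, f j ≤ a / (1 - t) := htsum ▸ Summable.sum_le_tsum u (fun i _ => hf i) hsum
    have h2 : 1 - ∑ j ∈ u, f j ≤ ∏ j ∈ u, (1 - f j) := by
      induction u using Finset.cons_induction with
      | empty => simp
      | cons b s hb ih =>
        rw [Finset.prod_cons, Finset.sum_cons]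
        have h3 : (0:ℝ) ≤ ∏ i ∈ s, (1 - f i) := hnn s
        have h4 : (0:ℝ) ≤ ∑ i ∈ s, f i := Finset.sum_nonneg fun i _ => hf i
        nlinarith [hf b, hf1 b, ih (le_trans (Finset.sum_le_sum_of_subset_of_nonneg
          (Finset.subset_cons hb) fun i _ _ => hf i) h1)]
    linarith

lemma Psi_diag' (t A : ℝ) (ht0 : 0 < t) (ht1 : t < 1) (n : ℕ) :
    Psi t A 0 0 n n =
      A ^ (-(n : ℤ)) * t ^ (n * n) * qPochInf (A⁻¹ * t ^ (n + 1)) t / qPoch t t (n : ℤ) := by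
  have hP := qPoch_pos' t ht0 ht1 n
  have hsum : ∑ k ∈ Finset.range (n + 1),
      (A * t) ^ k * qPoch (t ^ (-(n : ℤ))) t (k : ℤ) * qPoch (t ^ (-((0:ℕ) : ℤ))) t (k : ℤ) *
        qPoch (t ^ ((n : ℤ) - (n : ℤ) + (k : ℤ) + 1)) t ((n : ℤ) - (k : ℤ)) /
        qPoch t t (k : ℤ) = qPoch t t (n : ℤ) := by
    rw [Finset.sum_eq_single_of_mem 0 (Finset.mem_range.2 (Nat.succ_pos n))]
    · norm_num [qPoch_natCast']
      simp [qPoch]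
    · intro k hk hk0
      have h1 : qPoch (t ^ (-((0:ℕ) : ℤ))) t (k : ℤ) = 0 := by
        rw [show (-((0:ℕ):ℤ)) = 0 by norm_num, zpow_zero, qPoch_natCast']
        refine Finset.prod_eq_zero (Finset.mem_range.2 (Nat.pos_of_ne_zero hk0)) ?_
        simp
      rw [h1]
      ring
  simp only [Psi, hsum]
  have h0 : qPoch t t ((0:ℕ) : ℤ) = 1 := by simp [qPoch]
  rw [sub_self, sub_self, if_pos rfl, h0, Nat.add_zero, Nat.add_zero]
  have key : ∀ (Y P : ℝ), P ≠ 0 → 1 * (Y * 1 / (P * P)) * P = Y / P := by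
    intro Y P h; field_simp
  exact key _ _ hP.ne'

/-- asymptotics of `Ψ_A(0,0;·,·)` for `A = t(1-t)⁻¹(εθ)⁻²` as `ε → 0`. -/
theorem psi_asymptotics_00 (t θ : ℝ) (ht0 : 0 < t) (ht1 : t < 1) (hθ : 0 < θ) :
    ∃ C > (0 : ℝ), ∃ ε₀ > (0 : ℝ), ε₀ ≤ 1 ∧
      ∀ ε : ℝ, 0 < ε → ε < ε₀ →
        |Psi t (t / ((1 - t) * (ε * θ) ^ 2)) 0 0 0 0 - 1| ≤ C * ε ^ 2 ∧
        |Psi t (t / ((1 - t) * (ε * θ) ^ 2)) 0 0 1 1 - (ε * θ) ^ 2| ≤ C * ε ^ 4 ∧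
        Summable (fun k : ℕ => |Psi t (t / ((1 - t) * (ε * θ) ^ 2)) 0 0 (k + 2) (k + 2)|) ∧
        ∑' k : ℕ, |Psi t (t / ((1 - t) * (ε * θ) ^ 2)) 0 0 (k + 2) (k + 2)| ≤ C * ε ^ 4 := by
  have h1t : (0:ℝ) < 1 - t := by linarith
  refine ⟨θ ^ 2 + t * θ ^ 4 + 2 * θ ^ 4 + 1, by positivity, min 1 (1 / (2 * θ)), by positivity,
    min_le_left _ _, fun ε hε hεlt => ?_⟩
  set C := θ ^ 2 + t * θ ^ 4 + 2 * θ ^ 4 + 1 with hC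
  set s := (ε * θ) ^ 2 with hs
  set A := t / ((1 - t) * s) with hA
  have hεθ : ε * θ < 1 / 2 := by
    have h2 : ε < 1 / (2 * θ) := lt_of_lt_of_le hεlt (min_le_right _ _)
    calc ε * θ < (1 / (2 * θ)) * θ := mul_lt_mul_of_pos_right h2 hθ
      _ = 1 / 2 := by field_simp
  have hs0 : 0 < s := by positivity
  have hs14 : s < 1 / 4 := by
    have := mul_pos hε hθ
    nlinarith
  have hs1 : s ≤ 1 := by linarith
  have hA0 : 0 < A := by
    rw [hA]; positivity
  have hAinv : A⁻¹ = (1 - t) * s / t := by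
    rw [hA, inv_div]
  clear_value C s A
  have hεθ4 : s ^ 2 = θ ^ 4 * ε ^ 4 := by rw [hs]; ring
  have hεθ2 : s = θ ^ 2 * ε ^ 2 := by rw [hs]; ring
  have hCε2 : (0:ℝ) ≤ C * ε ^ 2 := by rw [hC]; positivity
  have hCε4pos : (0:ℝ) ≤ C * ε ^ 4 := by rw [hC]; positivity
  have hCb : θ ^ 2 * ε ^ 2 ≤ C * ε ^ 2 := by
    rw [hC]
    nlinarith [mul_nonneg (by positivity : (0:ℝ) ≤ t * θ ^ 4 + 2 * θ ^ 4 + 1) (sq_nonneg ε)]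
  have hCb2 : t * (θ ^ 4 * ε ^ 4) ≤ C * ε ^ 4 := by
    rw [hC]
    nlinarith [mul_nonneg (pow_nonneg hθ.le 2) (pow_nonneg hε.le 4),
      mul_nonneg (mul_nonneg (by norm_num : (0:ℝ) ≤ 2) (pow_nonneg hθ.le 4)) (pow_nonneg hε.le 4),
      pow_nonneg hε.le 4]
  have hCb3 : (4/3) * (θ ^ 4 * ε ^ 4) ≤ C * ε ^ 4 := by
    rw [hC]
    nlinarith [mul_nonneg (pow_nonneg hθ.le 2) (pow_nonneg hε.le 4),
      mul_nonneg (mul_nonneg ht0.le (pow_nonneg hθ.le 4)) (pow_nonneg hε.le 4),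
      mul_nonneg (pow_nonneg hθ.le 4) (pow_nonneg hε.le 4),
      pow_nonneg hε.le 4]
  -- the argument of qPochInf
  have harg : ∀ n : ℕ, A⁻¹ * t ^ (n + 1) = (1 - t) * s * t ^ n := by
    intro n
    rw [hAinv, pow_succ]
    field_simp
  have hQ : ∀ n : ℕ, 0 ≤ qPochInf ((1 - t) * s * t ^ n) t ∧
      qPochInf ((1 - t) * s * t ^ n) t ≤ 1 ∧
      1 - s * t ^ n ≤ qPochInf ((1 - t) * s * t ^ n) t := by
    intro n
    have htn0 : (0:ℝ) ≤ t ^ n := pow_nonneg ht0.le n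
    have htn1 : t ^ n ≤ 1 := pow_le_one₀ ht0.le ht1.le
    have ha0 : 0 ≤ (1 - t) * s * t ^ n := by positivity
    have ha1 : (1 - t) * s * t ^ n ≤ 1 := by nlinarith [mul_nonneg h1t.le hs0.le]
    obtain ⟨hq0, hq1, hq2⟩ := qPochInf_bounds' t ((1 - t) * s * t ^ n) ht0 ht1 ha0 ha1
    refine ⟨hq0, hq1, ?_⟩
    have heq3 : (1 - t) * s * t ^ n / (1 - t) = s * t ^ n := by
      field_simp
    rwa [heq3] at hq2
  -- general diagonal formula
  have hdiag : ∀ n : ℕ, Psi t A 0 0 n n =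
      A⁻¹ ^ n * t ^ (n * n) * qPochInf ((1 - t) * s * t ^ n) t / qPoch t t (n : ℤ) := by
    intro n
    rw [Psi_diag' t A ht0 ht1 n, harg n, zpow_neg, zpow_natCast, inv_pow]

  -- tail bounds: first establish the pointwise bound
  have hbound : ∀ k : ℕ, |Psi t A 0 0 (k + 2) (k + 2)| ≤ s ^ 2 * (1 / 4) ^ k := by
    intro k
    set n := k + 2 with hn
    obtain ⟨hq0, hq1, hq2⟩ := hQ n
    have hPpos := qPoch_pos' t ht0 ht1 n
    have hPge := qPoch_ge' t ht0 ht1 n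
    have hAi : (0:ℝ) ≤ A⁻¹ := inv_nonneg.2 hA0.le
    have hAin : (0:ℝ) ≤ A⁻¹ ^ n := pow_nonneg hAi n
    have hXnn : (0:ℝ) ≤ A⁻¹ ^ n * t ^ (n * n) :=
      mul_nonneg hAin (pow_nonneg ht0.le _)
    have hpsi_nonneg : 0 ≤ Psi t A 0 0 n n := by
      rw [hdiag n]
      exact div_nonneg (mul_nonneg hXnn hq0) hPpos.le
    have hX : A⁻¹ ^ n * t ^ (n * n) * qPochInf ((1 - t) * s * t ^ n) t
        ≤ s ^ n * (1 - t) ^ n := by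
      have ht_nn : t ^ (n * n) ≤ t ^ n :=
        pow_le_pow_of_le_one ht0.le ht1.le (Nat.le_mul_of_pos_left n (by omega))
      have step1 : A⁻¹ ^ n * t ^ (n * n) * qPochInf ((1 - t) * s * t ^ n) t
          ≤ A⁻¹ ^ n * t ^ n := by
        calc A⁻¹ ^ n * t ^ (n * n) * qPochInf ((1 - t) * s * t ^ n) t
            ≤ A⁻¹ ^ n * t ^ (n * n) * 1 := mul_le_mul_of_nonneg_left hq1 hXnn
          _ = A⁻¹ ^ n * t ^ (n * n) := mul_one _
          _ ≤ A⁻¹ ^ n * t ^ n := mul_le_mul_of_nonneg_left ht_nn hAin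
      refine le_trans step1 ?_
      rw [← mul_pow, hAinv]
      have heq2 : (1 - t) * s / t * t = s * (1 - t) := by
        field_simp
      rw [heq2, mul_pow]
    have hfinal : Psi t A 0 0 n n ≤ s ^ n := by
      rw [hdiag n, div_le_iff₀ hPpos]
      calc A⁻¹ ^ n * t ^ (n * n) * qPochInf ((1 - t) * s * t ^ n) t
          ≤ s ^ n * (1 - t) ^ n := hX
        _ ≤ s ^ n * qPoch t t (n : ℤ) :=
          mul_le_mul_of_nonneg_left hPge (pow_nonneg hs0.le n)
    rw [abs_of_nonneg hpsi_nonneg]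
    refine le_trans hfinal ?_
    have hsplit : s ^ n = s ^ 2 * s ^ k := by rw [hn]; ring
    rw [hsplit]
    refine mul_le_mul_of_nonneg_left ?_ (pow_nonneg hs0.le 2)
    exact pow_le_pow_left₀ hs0.le (by linarith) k
  have hgs : Summable (fun k : ℕ => s ^ 2 * (1 / 4) ^ k) :=
    (summable_geometric_of_lt_one (by norm_num) (by norm_num)).mul_left _
  have hsummable : Summable (fun k : ℕ => |Psi t A 0 0 (k + 2) (k + 2)|) :=
    Summable.of_nonneg_of_le (fun k => abs_nonneg _) hbound hgs
  have htail : ∑' k : ℕ, |Psi t A 0 0 (k + 2) (k + 2)| ≤ C * ε ^ 4 := by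
    refine le_trans (Summable.tsum_le_tsum hbound hsummable hgs) ?_
    rw [tsum_mul_left, tsum_geometric_of_lt_one (by norm_num) (by norm_num)]
    have h43 : s ^ 2 * ((1:ℝ) - 1/4)⁻¹ = (4/3) * s ^ 2 := by norm_num; ring
    rw [h43, hεθ4]
    exact hCb3
  refine ⟨?_, ?_, hsummable, htail⟩
  · -- n = 0
    have hq00 : qPoch t t ((0:ℕ) : ℤ) = 1 := by simp [qPoch]
    have h0 : Psi t A 0 0 0 0 = qPochInf ((1 - t) * s) t := by
      rw [hdiag 0, hq00]
      norm_num
    obtain ⟨hq0, hq1, hq2⟩ := hQ 0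
    simp only [pow_zero, mul_one] at hq0 hq1 hq2
    rw [h0, abs_le]
    constructor
    · linarith
    · linarith
  · -- n = 1
    obtain ⟨hq0, hq1, hq2⟩ := hQ 1
    have h1 : Psi t A 0 0 1 1 = s * qPochInf ((1 - t) * s * t ^ 1) t := by
      rw [hdiag 1]
      have hP1 : qPoch t t ((1:ℕ) : ℤ) = 1 - t := by simp [qPoch]
      rw [hP1, hAinv]
      field_simp
      ring
    rw [h1]
    have habs : |s * qPochInf ((1 - t) * s * t ^ 1) t - s| ≤ s * (s * t) := by
      rw [show s * qPochInf ((1 - t) * s * t ^ 1) t - s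
          = s * (qPochInf ((1 - t) * s * t ^ 1) t - 1) by ring, abs_mul,
        abs_of_pos hs0]
      have he : s * t ^ 1 = s * t := by ring
      have hst : 0 ≤ s * t := mul_nonneg hs0.le ht0.le
      have habs2 : |qPochInf ((1 - t) * s * t ^ 1) t - 1| ≤ s * t := by
        rw [abs_le]
        constructor <;> linarith
      exact mul_le_mul_of_nonneg_left habs2 hs0.le
    have hss : s * (s * t) = t * (θ ^ 4 * ε ^ 4) := by rw [hεθ2]; ring
    rw [hss] at habs
    exact le_trans habs hCb2
end

section
/- Fix t ∈ (0,1) and θ > 0, and for ε ∈ (0,1) set A = A(ε) = t(1−t)^{−1}(εθ)^{−2}. There exist constants C > 0 and ε₀ > 0 depending only on t and θ such that for all ε ∈ (0, ε₀): |Ψ_A(1,1;0,0) − (1−t)| ≤ Cε², |Ψ_A(1,1;1,1) − t| ≤ Cε², and Σ_{k=2}^{∞} Ψ_A(1,1;k,k) ≤ Cε². -/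
open Filter Finset

set_option maxHeartbeats 1000000
set_option linter.unusedSectionVars false

section Helpers
open Real

/-- Weierstrass product inequality. -/
lemma PsiAux.weier (s : Finset ℕ) (x : ℕ → ℝ) (h0 : ∀ j, 0 ≤ x j) (h1 : ∀ j, x j ≤ 1) :
    1 - ∑ j ∈ s, x j ≤ ∏ j ∈ s, (1 - x j) := by
  induction s using Finset.cons_induction with
  | empty => simp
  | cons a s ha ih =>
    rw [Finset.prod_cons, Finset.sum_cons]
    have hs : 0 ≤ ∑ j ∈ s, x j := Finset.sum_nonneg fun j _ => h0 j
    nlinarith [h0 a, h1 a, ih]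

namespace PsiAux

variable {t a : ℝ} (ht0 : 0 < t) (ht1 : t < 1) (ha0 : 0 ≤ a) (ha1 : a < 1)
include ht0 ht1 ha0 ha1

lemma fac_mem : ∀ j : ℕ, t ^ j * a ≤ a ∧ 0 ≤ t ^ j * a := by
  intro j
  have h1 := pow_le_one₀ ht0.le ht1.le (n := j)
  have h2 := pow_nonneg ht0.le j
  constructor
  · nlinarith
  · exact mul_nonneg h2 ha0

lemma factor_pos : ∀ j : ℕ, 0 < 1 - t ^ j * a := by
  intro j
  obtain ⟨h1, h2⟩ := fac_mem ht0 ht1 ha0 ha1 j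
  linarith

lemma sum_log : Summable fun j : ℕ => Real.log (1 - t ^ j * a) := by
  apply Summable.of_abs
  apply Summable.of_nonneg_of_le (fun j => abs_nonneg _)
    (f := fun j => t ^ j * (a / (1 - a)))
  · intro j
    have hp := factor_pos ht0 ht1 ha0 ha1 j
    obtain ⟨hta, htn⟩ := fac_mem ht0 ht1 ha0 ha1 j
    have hlog : Real.log (1 - t ^ j * a) ≤ 0 := Real.log_nonpos (by linarith) (by linarith)
    rw [abs_of_nonpos hlog]
    have h2 : Real.log ((1 - t ^ j * a)⁻¹) ≤ (1 - t ^ j * a)⁻¹ - 1 :=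
      Real.log_le_sub_one_of_pos (by positivity)
    rw [Real.log_inv] at h2
    have h3 : (1 - t ^ j * a)⁻¹ - 1 = (t ^ j * a) / (1 - t ^ j * a) := by
      field_simp
      ring
    rw [h3] at h2
    refine h2.trans ?_
    rw [div_le_iff₀ hp]
    have h1a : (0:ℝ) < 1 - a := by linarith
    have hu : a / (1 - a) * (1 - a) = a := div_mul_cancel₀ a h1a.ne'
    have hj : (0:ℝ) ≤ t ^ j := pow_nonneg ht0.le j
    have hun : (0:ℝ) ≤ a / (1 - a) := div_nonneg ha0 h1a.le
    nlinarith [mul_le_mul_of_nonneg_left hta (mul_nonneg hj hun),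
      mul_nonneg hj hun, mul_nonneg (mul_nonneg hj hun) htn]
  · exact (summable_geometric_of_lt_one ht0.le ht1).mul_right _

lemma mult_one_sub : Multipliable (fun j : ℕ => 1 - t ^ j * a) :=
  Real.multipliable_of_summable_log
    (fun j => factor_pos ht0 ht1 ha0 ha1 j) (sum_log ht0 ht1 ha0 ha1)

lemma prod_le_one' : ∏' j : ℕ, (1 - t ^ j * a) ≤ 1 := by
  have h := (mult_one_sub ht0 ht1 ha0 ha1).hasProd
  refine hasProd_le_of_prod_le h (fun s => Finset.prod_le_one (fun j _ => ?_) (fun j _ => ?_))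
  · exact (factor_pos ht0 ht1 ha0 ha1 j).le
  · have := (fac_mem ht0 ht1 ha0 ha1 j).2; linarith

lemma one_sub_le_prod : 1 - a / (1 - t) ≤ ∏' j : ℕ, (1 - t ^ j * a) := by
  have h := (mult_one_sub ht0 ht1 ha0 ha1).hasProd
  refine ge_of_tendsto h (Filter.Eventually.of_forall fun s => ?_)
  have h1 : ∑ j ∈ s, t ^ j * a ≤ a / (1 - t) := by
    calc ∑ j ∈ s, t ^ j * a ≤ ∑' j : ℕ, t ^ j * a :=
          Summable.sum_le_tsum s (fun j _ => (fac_mem ht0 ht1 ha0 ha1 j).2)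
            ((summable_geometric_of_lt_one ht0.le ht1).mul_right _)
    _ = (1 - t)⁻¹ * a := by rw [tsum_mul_right, tsum_geometric_of_lt_one ht0.le ht1]
    _ = a / (1 - t) := by rw [div_eq_inv_mul]
  have h2 := weier s (fun j => t ^ j * a) (fun j => (fac_mem ht0 ht1 ha0 ha1 j).2)
      (fun j => by show t ^ j * a ≤ 1; have := (fac_mem ht0 ht1 ha0 ha1 j).1; linarith)
  calc 1 - a / (1 - t) ≤ 1 - ∑ j ∈ s, t ^ j * a := by linarith
  _ ≤ ∏ j ∈ s, (1 - t ^ j * a) := h2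

end PsiAux

/-- The finite q-Pochhammer `(t;t)_n`. -/
noncomputable def PsiAux.Q (t : ℝ) (n : ℕ) : ℝ := ∏ j ∈ Finset.range n, (1 - t ^ j * t)

namespace PsiAux

section Qb
variable {t : ℝ} (ht0 : 0 < t) (ht1 : t < 1)
include ht0 ht1

lemma Qfac (j : ℕ) : 0 ≤ t ^ j * t ∧ t ^ j * t ≤ t := by
  have h1 := pow_le_one₀ ht0.le ht1.le (n := j)
  have h2 := pow_nonneg ht0.le j
  constructor
  · positivity
  · nlinarith

lemma Q_pos (n : ℕ) : 0 < Q t n := by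
  refine Finset.prod_pos fun j _ => ?_
  have := (Qfac ht0 ht1 j).2
  linarith

lemma Q_anti {m n : ℕ} (h : m ≤ n) : Q t n ≤ Q t m := by
  rw [Q, Q, ← Finset.prod_range_mul_prod_Ico _ h]
  have hpos : 0 < ∏ j ∈ Finset.range m, (1 - t ^ j * t) := Q_pos ht0 ht1 m
  have hle : ∏ j ∈ Finset.Ico m n, (1 - t ^ j * t) ≤ 1 := by
    refine Finset.prod_le_one (fun j _ => ?_) (fun j _ => ?_)
    · have := (Qfac ht0 ht1 j).2; linarith
    · have := (Qfac ht0 ht1 j).1; linarith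
  nlinarith

lemma Q_lower : ∃ D > (0:ℝ), ∀ n, D ≤ Q t n := by
  obtain ⟨m, hm⟩ := exists_pow_lt_of_lt_one (x := (1 - t) / 2) (by linarith) ht1
  refine ⟨Q t m / 2, by have := Q_pos ht0 ht1 m; linarith, fun n => ?_⟩
  rcases le_or_gt n m with h | h
  · have := Q_anti ht0 ht1 h
    have := Q_pos ht0 ht1 m
    linarith
  · have hmn : m ≤ n := h.le
    have hsplit : Q t n = Q t m * ∏ j ∈ Finset.Ico m n, (1 - t ^ j * t) :=
      (Finset.prod_range_mul_prod_Ico _ hmn).symm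
    have hIco : 1 - ∑ j ∈ Finset.Ico m n, t ^ j * t ≤ ∏ j ∈ Finset.Ico m n, (1 - t ^ j * t) :=
      weier _ _ (fun j => (Qfac ht0 ht1 j).1)
        (fun j => by have := (Qfac ht0 ht1 j).2; linarith)
    have hsum : ∑ j ∈ Finset.Ico m n, t ^ j * t ≤ 1 / 2 := by
      rw [Finset.sum_Ico_eq_sum_range]
      have h1 : ∀ i : ℕ, t ^ (m + i) * t ≤ t ^ m * t ^ i := by
        intro i
        rw [pow_add]
        have h2 := pow_nonneg ht0.le m
        have h3 := pow_nonneg ht0.le i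
        nlinarith [mul_nonneg h2 h3]
      calc ∑ i ∈ Finset.range (n - m), t ^ (m + i) * t
          ≤ ∑ i ∈ Finset.range (n - m), t ^ m * t ^ i := Finset.sum_le_sum fun i _ => h1 i
        _ = t ^ m * ∑ i ∈ Finset.range (n - m), t ^ i := by rw [Finset.mul_sum]
        _ ≤ t ^ m * (1 - t)⁻¹ := by
            refine mul_le_mul_of_nonneg_left ?_ (pow_nonneg ht0.le m)
            calc ∑ i ∈ Finset.range (n - m), t ^ i ≤ ∑' i : ℕ, t ^ i :=
                  Summable.sum_le_tsum _ (fun i _ => pow_nonneg ht0.le i)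
                    (summable_geometric_of_lt_one ht0.le ht1)
              _ = (1 - t)⁻¹ := tsum_geometric_of_lt_one ht0.le ht1
        _ ≤ 1 / 2 := by
            rw [inv_eq_one_div, mul_one_div, div_le_div_iff₀ (by linarith) two_pos]
            linarith
    have h5 : (1:ℝ)/2 ≤ ∏ j ∈ Finset.Ico m n, (1 - t ^ j * t) := by linarith
    have h6 := Q_pos ht0 ht1 m
    have := mul_le_mul_of_nonneg_left h5 h6.le
    rw [hsplit]
    nlinarith

end Qb

lemma qPoch_natCast (t a : ℝ) (n : ℕ) :
    qPoch a t (n : ℤ) = ∏ j ∈ Finset.range n, (1 - t ^ j * a) := by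
  simp [qPoch]

lemma qPoch_sub_one (t a : ℝ) (n : ℕ) (hn : 1 ≤ n) :
    qPoch a t ((n : ℤ) - 1) = ∏ j ∈ Finset.range (n - 1), (1 - t ^ j * a) := by
  rw [qPoch, if_pos (by omega)]
  have h : ((n : ℤ) - 1).toNat = n - 1 := by omega
  rw [h]

lemma Q_succ_eq (t : ℝ) (n : ℕ) (hn : 1 ≤ n) :
    Q t n = (1 - t) * ∏ j ∈ Finset.range (n - 1), (1 - t ^ j * t ^ 2) := by
  obtain ⟨m, rfl⟩ : ∃ m, n = m + 1 := ⟨n - 1, by omega⟩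
  rw [Q, Finset.prod_range_succ']
  simp only [pow_zero, one_mul, Nat.add_sub_cancel]
  rw [mul_comm]
  congr 1
  refine Finset.prod_congr rfl fun j _ => ?_
  ring

lemma Psi_formula (t A : ℝ) (ht : t ≠ 0) (ht1 : (1:ℝ) - t ≠ 0) (hA : A ≠ 0)
    (n : ℕ) (hn : 1 ≤ n) (hQ : Q t n ≠ 0) :
    Psi t A 1 1 n n = qPochInf (A⁻¹ * t ^ (n + 2)) t / Q t n *
      ((A ^ n)⁻¹ * t ^ (n * (n + 1)) * (1 - t) + A * (A ^ n)⁻¹ * t ^ (n * n) * (1 - t ^ n)) := by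
  have hsum : ∑ k ∈ Finset.range (n + 1),
      (A * t) ^ k * qPoch (t ^ (-(n : ℤ))) t (k : ℤ) * qPoch (t ^ (-(1 : ℤ))) t (k : ℤ) *
        qPoch (t ^ ((n : ℤ) - (n : ℤ) + (k : ℤ) + 1)) t ((n : ℤ) - (k : ℤ)) /
        qPoch t t (k : ℤ) =
      Q t n + (A * t) * (1 - (t ^ n)⁻¹) * (1 - t⁻¹) *
        (∏ j ∈ Finset.range (n - 1), (1 - t ^ j * t ^ 2)) / (1 - t) := by
    rw [← Finset.sum_subset (Finset.range_subset_range.2 (by omega : 2 ≤ n + 1))]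
    · rw [Finset.sum_range_succ, Finset.sum_range_one]
      norm_num
      have e0 : ∀ a : ℝ, qPoch a t (0 : ℤ) = 1 := fun a => by simp [qPoch]
      have e4 : ∀ a : ℝ, qPoch a t (1 : ℤ) = 1 - a := fun a => by
        simp [qPoch]
      have e1 : qPoch t t ((n : ℤ)) = Q t n := by rw [qPoch_natCast]; rfl
      have e2 : qPoch (t ^ (2 : ℤ)) t ((n : ℤ) - 1) =
          ∏ j ∈ Finset.range (n - 1), (1 - t ^ j * t ^ 2) := by
        rw [qPoch_sub_one t (t ^ (2 : ℤ)) n hn]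
        refine Finset.prod_congr rfl fun j _ => ?_
        rw [show ((2:ℤ)) = ((2:ℕ):ℤ) from rfl, zpow_natCast]
      rw [e0, e0, e0, e4, e4, e4, e1]
      simp only [zpow_ofNat] at e2 ⊢
      rw [e2]
      ring
    · intro k hk1 hk2
      simp only [Finset.mem_range] at hk1 hk2
      have h2k : 2 ≤ k := by omega
      have : qPoch (t ^ (-(1 : ℤ))) t (k : ℤ) = 0 := by
        rw [qPoch_natCast]
        refine Finset.prod_eq_zero (Finset.mem_range.2 (by omega : 1 < k)) ?_
        rw [zpow_neg, zpow_one, pow_one, mul_inv_cancel₀ ht]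
        ring
      rw [this]
      ring
  rw [Psi]
  simp only [Nat.cast_one]
  rw [hsum]
  simp only [sub_self, if_true]
  have hcast : qPoch t t (1 : ℤ) = 1 - t := by simp [qPoch]
  rw [show qPoch t t ((n:ℕ) : ℤ) = Q t n from by rw [qPoch_natCast]; rfl]
  rw [hcast]
  have hz : A ^ (-(n : ℤ)) = (A ^ n)⁻¹ := by rw [zpow_neg, zpow_natCast]
  rw [hz]
  have hQid := Q_succ_eq t n hn
  have htn : t ^ n ≠ 0 := pow_ne_zero _ ht
  have hAn : A ^ n ≠ 0 := pow_ne_zero _ hA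
  rw [show n + 1 + 1 = n + 2 from rfl]
  field_simp
  rw [hQid]
  ring

lemma Psi_zero (t A : ℝ) : Psi t A 1 1 0 0 = qPochInf (A⁻¹ * t ^ 2) t * (1 - t) := by
  simp [Psi, qPoch, Finset.sum_range_succ, Finset.prod_range_succ]

end PsiAux

end Helpers

/-- asymptotics of `Ψ_A(1,1;·,·)` for `A = t(1-t)⁻¹(εθ)⁻²` as `ε → 0`. -/
theorem psi_asymptotics_11 (t θ : ℝ) (ht0 : 0 < t) (ht1 : t < 1) (hθ : 0 < θ) :
    ∃ C > (0 : ℝ), ∃ ε₀ > (0 : ℝ), ε₀ ≤ 1 ∧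
      ∀ ε : ℝ, 0 < ε → ε < ε₀ →
        |Psi t (t / ((1 - t) * (ε * θ) ^ 2)) 1 1 0 0 - (1 - t)| ≤ C * ε ^ 2 ∧
        |Psi t (t / ((1 - t) * (ε * θ) ^ 2)) 1 1 1 1 - t| ≤ C * ε ^ 2 ∧
        Summable (fun k : ℕ => Psi t (t / ((1 - t) * (ε * θ) ^ 2)) 1 1 (k + 2) (k + 2)) ∧
        ∑' k : ℕ, Psi t (t / ((1 - t) * (ε * θ) ^ 2)) 1 1 (k + 2) (k + 2) ≤ C * ε ^ 2 := by
  classical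
  obtain ⟨D, hD, hQD⟩ := PsiAux.Q_lower ht0 ht1
  have ht1' : (0:ℝ) < 1 - t := by linarith
  set C : ℝ := 3 * θ ^ 2 + 2 * θ ^ 2 / (t * D) + 1 with hC
  have hCpos : 0 < C := by positivity
  have hCθ : θ ^ 2 ≤ C ∧ 2 * θ ^ 2 ≤ C ∧ 2 * θ ^ 2 / (t * D) ≤ C := by
    have h1 : 0 ≤ 2 * θ ^ 2 / (t * D) := by positivity
    have h2 : 0 ≤ θ ^ 2 := sq_nonneg θ
    refine ⟨by rw [hC]; nlinarith, by rw [hC]; nlinarith, by rw [hC]; nlinarith⟩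
  clear_value C
  refine ⟨C, hCpos, min 1 (min (1/(2*θ)) (Real.sqrt (t/(1-t)) / θ)),
    lt_min one_pos (lt_min (by positivity)
      (div_pos (Real.sqrt_pos.2 (div_pos ht0 ht1')) hθ)), min_le_left _ _, ?_⟩
  intro ε hε hεlt
  set A : ℝ := t / ((1 - t) * (ε * θ) ^ 2) with hA
  have hu : (0:ℝ) < (ε * θ) ^ 2 := by positivity
  have hApos : 0 < A := div_pos ht0 (by positivity)
  have hAne : A ≠ 0 := hApos.ne'
  have hAinv : A⁻¹ = (1 - t) * (ε * θ) ^ 2 / t := by rw [hA, inv_div]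
  have heq : (ε * θ) ^ 2 = θ ^ 2 * ε ^ 2 := by ring
  have hεθ : ε * θ < 1/2 := by
    have h2 : ε < 1/(2*θ) := lt_of_lt_of_le hεlt ((min_le_right _ _).trans (min_le_left _ _))
    rw [lt_div_iff₀ (by positivity)] at h2
    linarith
  have hu4 : (ε * θ) ^ 2 < 1/4 := by nlinarith [mul_pos hε hθ]
  have hA1 : 1 < A := by
    have h3 : ε < Real.sqrt (t/(1-t)) / θ :=
      lt_of_lt_of_le hεlt ((min_le_right _ _).trans (min_le_right _ _))
    have h4 : ε * θ < Real.sqrt (t/(1-t)) := by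
      rw [lt_div_iff₀ hθ] at h3; linarith [h3]
    have hsq := Real.sq_sqrt (le_of_lt (div_pos ht0 ht1'))
    have h5 : (ε * θ) ^ 2 < t/(1-t) := by
      nlinarith [Real.sqrt_nonneg (t/(1-t)), mul_pos hε hθ]
    rw [lt_div_iff₀ ht1'] at h5
    rw [hA, lt_div_iff₀ (by positivity)]
    nlinarith
  clear_value A
  -- bounds on the infinite products
  have prodB : ∀ m : ℕ, 2 ≤ m →
      A⁻¹ * t ^ m ≤ (1 - t) * (θ ^ 2 * ε ^ 2) ∧
      1 - θ ^ 2 * ε ^ 2 ≤ qPochInf (A⁻¹ * t ^ m) t ∧ qPochInf (A⁻¹ * t ^ m) t ≤ 1 := by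
    intro m hm
    have ha0 : 0 ≤ A⁻¹ * t ^ m := by positivity
    have htm : t ^ m ≤ t := by
      calc t ^ m ≤ t ^ 1 := pow_le_pow_of_le_one ht0.le ht1.le (by omega)
        _ = t := pow_one t
    have key : A⁻¹ * t ^ m ≤ (1 - t) * (θ ^ 2 * ε ^ 2) := by
      rw [hAinv, ← heq, div_mul_eq_mul_div, div_le_iff₀ ht0]
      nlinarith [mul_le_mul_of_nonneg_left htm
        (by positivity : (0:ℝ) ≤ (1 - t) * (ε * θ) ^ 2)]
    have hθε : θ ^ 2 * ε ^ 2 < 1/4 := by rw [← heq]; exact hu4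
    have ha1 : A⁻¹ * t ^ m < 1 := by nlinarith [ht1'.le]
    refine ⟨key, ?_, ?_⟩
    · have hlow := PsiAux.one_sub_le_prod ht0 ht1 ha0 ha1
      have hdiv : (A⁻¹ * t ^ m)/(1 - t) ≤ θ ^ 2 * ε ^ 2 := by
        rw [div_le_iff₀ ht1']; nlinarith
      have : (1:ℝ) - θ ^ 2 * ε ^ 2 ≤ 1 - (A⁻¹ * t ^ m)/(1 - t) := by linarith
      exact le_trans this (by simpa [qPochInf] using hlow)
    · simpa [qPochInf] using PsiAux.prod_le_one' ht0 ht1 ha0 ha1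
  have hθε : θ ^ 2 * ε ^ 2 < 1/4 := by rw [← heq]; exact hu4
  have hε2 : 0 < ε ^ 2 := by positivity
  refine ⟨?_, ?_, ?_⟩
  -- Part 1
  · obtain ⟨hk2, hl2, hu2⟩ := prodB 2 le_rfl
    rw [PsiAux.Psi_zero]
    set P := qPochInf (A⁻¹ * t ^ 2) t
    rw [abs_le]
    constructor
    · nlinarith [hCθ.1]
    · nlinarith [hCθ.1]
  -- Part 2
  · have hQ1 : PsiAux.Q t 1 = 1 - t := by simp [PsiAux.Q]
    have hPsi1 : Psi t A 1 1 1 1 = qPochInf (A⁻¹ * t ^ 3) t * (A⁻¹ * t ^ 2 + t) := by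
      rw [PsiAux.Psi_formula t A ht0.ne' ht1'.ne' hAne 1 le_rfl (by rw [hQ1]; exact ht1'.ne'),
        hQ1]
      norm_num
      field_simp
    obtain ⟨hk3, hl3, hu3⟩ := prodB 3 (by omega)
    obtain ⟨hk2', _, _⟩ := prodB 2 le_rfl
    rw [hPsi1]
    set P := qPochInf (A⁻¹ * t ^ 3) t
    have hP0 : 0 ≤ P := by nlinarith
    have hAt2 : 0 ≤ A⁻¹ * t ^ 2 := by positivity
    have hθε0 : (0:ℝ) ≤ θ ^ 2 * ε ^ 2 := by positivity
    have hAt2le : A⁻¹ * t ^ 2 ≤ θ ^ 2 * ε ^ 2 := by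
      nlinarith [mul_nonneg ht0.le hθε0]
    have hCm : 0 ≤ (C - θ ^ 2) * ε ^ 2 :=
      mul_nonneg (by linarith [hCθ.1]) hε2.le
    rw [abs_le]
    constructor
    · nlinarith [mul_nonneg hP0 hAt2,
        mul_le_mul_of_nonneg_right (show 1 - P ≤ θ ^ 2 * ε ^ 2 by linarith) ht0.le,
        mul_nonneg hθε0 (show (0:ℝ) ≤ 1 - t by linarith)]
    · nlinarith [mul_le_mul_of_nonneg_right hu3 hAt2,
        mul_nonneg (show (0:ℝ) ≤ 1 - P by linarith) ht0.le]
  -- Part 3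
  · have hbound : ∀ k : ℕ, 0 ≤ Psi t A 1 1 (k + 2) (k + 2) ∧
        Psi t A 1 1 (k + 2) (k + 2) ≤ 2 * A⁻¹ / D * t ^ k := by
      intro k
      have hQpos := PsiAux.Q_pos ht0 ht1 (k + 2)
      have hfor := PsiAux.Psi_formula t A ht0.ne' ht1'.ne' hAne (k + 2) (by omega) hQpos.ne'
      obtain ⟨hkk, hlk, huk⟩ := prodB (k + 2 + 2) (by omega)
      set P := qPochInf (A⁻¹ * t ^ (k + 2 + 2)) t
      have hP0 : 0 ≤ P := by nlinarith
      set X := (A ^ (k + 2))⁻¹ * t ^ ((k + 2) * (k + 2 + 1)) * (1 - t) with hX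
      set Y := A * (A ^ (k + 2))⁻¹ * t ^ ((k + 2) * (k + 2)) * (1 - t ^ (k + 2)) with hY
      have hApow_pos : (0:ℝ) < A ^ (k + 2) := pow_pos hApos _
      have htk : (0:ℝ) < t ^ k := pow_pos ht0 k
      have htk2 : t ^ (k + 2) ≤ 1 := pow_le_one₀ ht0.le ht1.le
      have hgrow : A ≤ A ^ (k + 2) := le_self_pow₀ hA1.le (by omega)
      have hgrow1 : A ≤ A ^ (k + 1) := le_self_pow₀ hA1.le (by omega)
      have hinv : (A ^ (k + 2))⁻¹ ≤ A⁻¹ := by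
        apply inv_anti₀ hApos hgrow
      have hle1 : k ≤ (k + 2) * (k + 2 + 1) := by
        calc k ≤ k + 2 := by omega
          _ ≤ (k + 2) * (k + 2 + 1) := Nat.le_mul_of_pos_right _ (by omega)
      have hle2 : k ≤ (k + 2) * (k + 2) := by
        calc k ≤ k + 2 := by omega
          _ ≤ (k + 2) * (k + 2) := Nat.le_mul_of_pos_right _ (by omega)
      have hexp1 : t ^ ((k + 2) * (k + 2 + 1)) ≤ t ^ k :=
        pow_le_pow_of_le_one ht0.le ht1.le hle1
      have hexp2 : t ^ ((k + 2) * (k + 2)) ≤ t ^ k :=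
        pow_le_pow_of_le_one ht0.le ht1.le hle2
      have hX0 : 0 ≤ X := by
        rw [hX]
        exact mul_nonneg (mul_nonneg (inv_nonneg.2 hApow_pos.le) (pow_nonneg ht0.le _)) ht1'.le
      have hY0 : 0 ≤ Y := by
        rw [hY]
        exact mul_nonneg (mul_nonneg (mul_nonneg hApos.le (inv_nonneg.2 hApow_pos.le))
          (pow_nonneg ht0.le _)) (by linarith : (0:ℝ) ≤ 1 - t ^ (k + 2))
      have hAY : A * (A ^ (k + 2))⁻¹ ≤ A⁻¹ := by
        have hid : A * (A ^ (k + 2))⁻¹ = (A ^ (k + 1))⁻¹ := by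
          rw [pow_succ']
          field_simp
        rw [hid]
        exact inv_anti₀ hApos hgrow1
      have hXle : X ≤ A⁻¹ * t ^ k := by
        rw [hX]
        have h1 : (A ^ (k + 2))⁻¹ * t ^ ((k + 2) * (k + 2 + 1)) ≤ A⁻¹ * t ^ k := by
          apply mul_le_mul hinv hexp1 (pow_nonneg ht0.le _) (inv_nonneg.2 hApos.le)
        have h2 : 0 ≤ (A ^ (k + 2))⁻¹ * t ^ ((k + 2) * (k + 2 + 1)) :=
          mul_nonneg (inv_nonneg.2 hApow_pos.le) (pow_nonneg ht0.le _)
        calc (A ^ (k + 2))⁻¹ * t ^ ((k + 2) * (k + 2 + 1)) * (1 - t)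
            ≤ (A ^ (k + 2))⁻¹ * t ^ ((k + 2) * (k + 2 + 1)) * 1 :=
              mul_le_mul_of_nonneg_left (by linarith) h2
          _ = (A ^ (k + 2))⁻¹ * t ^ ((k + 2) * (k + 2 + 1)) := mul_one _
          _ ≤ A⁻¹ * t ^ k := h1
      have hYle : Y ≤ A⁻¹ * t ^ k := by
        rw [hY]
        have h1 : A * (A ^ (k + 2))⁻¹ * t ^ ((k + 2) * (k + 2)) ≤ A⁻¹ * t ^ k := by
          apply mul_le_mul hAY hexp2 (pow_nonneg ht0.le _) (inv_nonneg.2 hApos.le)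
        have h2 : 0 ≤ A * (A ^ (k + 2))⁻¹ * t ^ ((k + 2) * (k + 2)) :=
          mul_nonneg (mul_nonneg hApos.le (inv_nonneg.2 hApow_pos.le)) (pow_nonneg ht0.le _)
        calc A * (A ^ (k + 2))⁻¹ * t ^ ((k + 2) * (k + 2)) * (1 - t ^ (k + 2))
            ≤ A * (A ^ (k + 2))⁻¹ * t ^ ((k + 2) * (k + 2)) * 1 :=
              mul_le_mul_of_nonneg_left (by linarith [pow_nonneg ht0.le (k + 2)]) h2
          _ = A * (A ^ (k + 2))⁻¹ * t ^ ((k + 2) * (k + 2)) := mul_one _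
          _ ≤ A⁻¹ * t ^ k := h1
      constructor
      · rw [hfor]
        have h3 : (0:ℝ) ≤ P / PsiAux.Q t (k + 2) := div_nonneg hP0 hQpos.le
        exact mul_nonneg h3 (by linarith)
      · rw [hfor]
        have hPQ : P / PsiAux.Q t (k + 2) ≤ 1 / D :=
          div_le_div₀ zero_le_one huk hD (hQD (k + 2))
        have hXY : X + Y ≤ 2 * (A⁻¹ * t ^ k) := by linarith
        calc P / PsiAux.Q t (k + 2) * (X + Y) ≤ 1 / D * (2 * (A⁻¹ * t ^ k)) := by
              apply mul_le_mul hPQ hXY (by linarith) (one_div_pos.2 hD).le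
          _ = 2 * A⁻¹ / D * t ^ k := by ring
    have hsummg : Summable (fun k : ℕ => 2 * A⁻¹ / D * t ^ k) :=
      (summable_geometric_of_lt_one ht0.le ht1).mul_left _
    have hsumm : Summable (fun k : ℕ => Psi t A 1 1 (k + 2) (k + 2)) :=
      Summable.of_nonneg_of_le (fun k => (hbound k).1) (fun k => (hbound k).2) hsummg
    refine ⟨hsumm, ?_⟩
    have htsum : ∑' k : ℕ, Psi t A 1 1 (k + 2) (k + 2) ≤ ∑' k : ℕ, 2 * A⁻¹ / D * t ^ k :=
      Summable.tsum_le_tsum (fun k => (hbound k).2) hsumm hsummg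
    have hgeo : ∑' k : ℕ, 2 * A⁻¹ / D * t ^ k = 2 * A⁻¹ / D * (1 - t)⁻¹ := by
      rw [tsum_mul_left, tsum_geometric_of_lt_one ht0.le ht1]
    have hfinal : 2 * A⁻¹ / D * (1 - t)⁻¹ ≤ C * ε ^ 2 := by
      rw [hAinv, heq]
      have hid : 2 * ((1 - t) * (θ ^ 2 * ε ^ 2) / t) / D * (1 - t)⁻¹
          = 2 * θ ^ 2 / (t * D) * ε ^ 2 := by
        field_simp
      rw [hid]
      nlinarith [hCθ.2.2, hε2]
    linarith
end

section
/- Let N ≥ 1 be an integer, t ∈ (0,1), τ ∈ ℂ, and x₁,…,x_N, y₁,…,y_N ∈ (0,1). Then det_{1≤i,j≤N}[1/(1−x_i y_j) − τ/(1−t x_i y_j)] = Σ_{0 ≤ a₁ < a₂ < ⋯ < a_N} ∏_{i=1}^{N}(1 − τ t^{a_i}) · det_{1≤i,j≤N}[x_i^{a_j}] · det_{1≤i,j≤N}[y_i^{a_j}], where the sum is over all strictly increasing N-tuples of nonnegative integers and converges absolutely. -/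
open Filter Finset



/-- product of tsums over a Pi type, with absolute convergence. -/
lemma pi_summable_tsum_prod : ∀ (n : ℕ) (f : Fin n → ℕ → ℂ),
    (∀ i, Summable fun a => ‖f i a‖) →
    Summable (fun a : Fin n → ℕ => ‖∏ i, f i (a i)‖) ∧
    (∑' a : Fin n → ℕ, ∏ i, f i (a i)) = ∏ i, ∑' a, f i a := by
  intro n
  induction n with
  | zero =>
    intro f _
    constructor
    · exact Summable.of_finite
    · simp [tsum_fintype]
  | succ n ih =>
    intro f hf
    set e := (Fin.consEquiv (fun _ : Fin (n + 1) => ℕ)).symm with he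
    have obtainih := ih (fun i => f i.succ) (fun i => hf i.succ)
    set F : ℕ × (Fin n → ℕ) → ℂ := fun p => f 0 p.1 * ∏ i : Fin n, f i.succ (p.2 i) with hF
    have hcomp : ∀ a : Fin (n + 1) → ℕ, (∏ i, f i (a i)) = F (e a) := by
      intro a
      rw [Fin.prod_univ_succ]
      rfl
    have hFsum : Summable fun p => ‖F p‖ := by
      have := (hf 0).mul_of_nonneg obtainih.1 (fun _ => norm_nonneg _) (fun _ => norm_nonneg _)
      apply this.congr
      intro p
      rw [hF]
      simp [norm_mul]
    constructor
    · exact (hFsum.comp_injective e.injective).congr fun a => by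
        simp only [Function.comp_apply, hcomp a]
    · have h1 : (∑' a : Fin (n+1) → ℕ, ∏ i, f i (a i)) = ∑' p, F p := by
        rw [tsum_congr hcomp]
        exact (Equiv.tsum_eq e F)
      rw [h1, Fin.prod_univ_succ, ← obtainih.2]
      exact (tsum_mul_tsum_of_summable_norm (hf 0) obtainih.1).symm

lemma entry_summable_norm {t : ℝ} (ht0 : 0 ≤ t) (ht1 : t ≤ 1) (τ : ℂ) {z : ℂ} (hz : ‖z‖ < 1) :
    Summable fun a : ℕ => ‖(1 - τ * (t : ℂ) ^ a) * z ^ a‖ := by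
  apply Summable.of_nonneg_of_le (fun _ => norm_nonneg _) (fun a => ?_)
    ((summable_geometric_of_lt_one (norm_nonneg z) hz).mul_left (1 + ‖τ‖))
  rw [norm_mul, norm_pow]
  gcongr
  calc ‖1 - τ * (t:ℂ)^a‖ ≤ ‖(1:ℂ)‖ + ‖τ * (t:ℂ)^a‖ := norm_sub_le _ _
  _ ≤ 1 + ‖τ‖ := by
      rw [norm_one, norm_mul, norm_pow, Complex.norm_real, Real.norm_of_nonneg ht0]
      have : t ^ a ≤ 1 := pow_le_one₀ ht0 ht1
      nlinarith [norm_nonneg τ]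

lemma entry_hasSum {t : ℝ} {τ : ℂ} {z : ℂ} (hz : ‖z‖ < 1) (htz : ‖(t : ℂ) * z‖ < 1) :
    HasSum (fun a : ℕ => (1 - τ * (t : ℂ) ^ a) * z ^ a)
      (1 / (1 - z) - τ / (1 - (t : ℂ) * z)) := by
  have h1 := hasSum_geometric_of_norm_lt_one hz
  have h2 := (hasSum_geometric_of_norm_lt_one htz).mul_left τ
  have h := h1.sub h2
  rw [show (fun a : ℕ => (1 - τ * (t:ℂ)^a) * z^a) = fun a : ℕ => z^a - τ * ((t:ℂ)*z)^a from
    funext fun a => by rw [mul_pow]; ring]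
  rw [one_div, div_eq_mul_inv]; exact h


/-- Injective tuples correspond to (strictly increasing tuple, permutation) pairs. -/
def strictMonoPermEquiv (N : ℕ) :
    ({s : Fin N → ℕ // StrictMono s} × Equiv.Perm (Fin N)) ≃
      {a : Fin N → ℕ // Function.Injective a} where
  toFun p := ⟨p.1.1 ∘ p.2, p.1.2.injective.comp p.2.injective⟩
  invFun a := (⟨a.1 ∘ Tuple.sort a.1,
      (Tuple.monotone_sort a.1).strictMono_of_injective
        (a.2.comp (Tuple.sort a.1).injective)⟩, (Tuple.sort a.1)⁻¹)
  left_inv := by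
    rintro ⟨⟨s, hs⟩, σ⟩
    have ha : Function.Injective (s ∘ σ) := hs.injective.comp σ.injective
    have hsort : σ⁻¹ = Tuple.sort (s ∘ σ) := by
      rw [Tuple.eq_sort_iff]
      constructor
      · have : (s ∘ ⇑σ) ∘ ⇑σ⁻¹ = s := by
          funext i; simp
        rw [this]; exact hs.monotone
      · intro i j hij hf
        exact absurd (σ⁻¹.injective (ha hf)) hij.ne
    ext i
    · simp [← hsort]
    · simp [← hsort]
  right_inv := by
    rintro ⟨a, ha⟩
    ext i
    simp

lemma strictMonoPermEquiv_apply (N : ℕ) (p) :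
    ((strictMonoPermEquiv N) p).1 = p.1.1 ∘ p.2 := rfl


/-- The term of the Cauchy–Binet expansion indexed by a tuple `a : Fin N → ℕ`:
`∏_{i=1}^N (1 - τ t^{a_i}) · det[x_i^{a_j}] · det[y_i^{a_j}]`. -/
noncomputable def cauchyBinetTerm (N : ℕ) (t : ℝ) (τ : ℂ) (x y : Fin N → ℝ)
    (a : Fin N → ℕ) : ℂ :=
  (∏ i : Fin N, (1 - τ * (t : ℂ) ^ a i)) *
    Matrix.det (Matrix.of fun i j : Fin N => ((x i : ℂ) ^ a j)) *
    Matrix.det (Matrix.of fun i j : Fin N => ((y i : ℂ) ^ a j))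

set_option maxHeartbeats 1000000 in
/-- the Cauchy–Binet expansion of
`det[1/(1 - x_i y_j) - τ/(1 - t x_i y_j)]` over strictly increasing tuples
`0 ≤ a₁ < a₂ < ⋯ < a_N` of nonnegative integers; the series converges absolutely. -/
theorem det_cauchy_binet_expansion (N : ℕ) (hN : 1 ≤ N) (t : ℝ) (ht0 : 0 < t) (ht1 : t < 1)
    (τ : ℂ) (x y : Fin N → ℝ) (hx : ∀ i, x i ∈ Set.Ioo (0 : ℝ) 1)
    (hy : ∀ i, y i ∈ Set.Ioo (0 : ℝ) 1) :
    Summable (fun a : {a : Fin N → ℕ // StrictMono a} => ‖cauchyBinetTerm N t τ x y a.1‖) ∧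
    Matrix.det (Matrix.of fun i j : Fin N =>
        1 / (1 - (x i : ℂ) * (y j : ℂ)) - τ / (1 - (t : ℂ) * (x i : ℂ) * (y j : ℂ))) =
      ∑' a : {a : Fin N → ℕ // StrictMono a}, cauchyBinetTerm N t τ x y a.1 := by
  classical
  have hx0 : ∀ i, 0 < x i := fun i => (hx i).1
  have hx1 : ∀ i, x i < 1 := fun i => (hx i).2
  have hy0 : ∀ i, 0 < y i := fun i => (hy i).1
  have hy1 : ∀ i, y i < 1 := fun i => (hy i).2
  have hne : (Finset.univ : Finset (Fin N)).Nonempty := ⟨⟨0, hN⟩, Finset.mem_univ _⟩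
  set X : ℝ := Finset.univ.sup' hne x with hXdef
  have hX1 : X < 1 := (Finset.sup'_lt_iff hne).mpr fun i _ => hx1 i
  have hX0 : 0 < X := lt_of_lt_of_le (hx0 ⟨0, hN⟩) (Finset.le_sup' x (Finset.mem_univ _))
  have hxX : ∀ i, x i ≤ X := fun i => Finset.le_sup' x (Finset.mem_univ _)
  set c : ℕ → ℂ := fun n => 1 - τ * (t : ℂ) ^ n with hcdef
  have hcle : ∀ n, ‖c n‖ ≤ 1 + ‖τ‖ := by
    intro n
    calc ‖(1 : ℂ) - τ * (t : ℂ) ^ n‖ ≤ ‖(1 : ℂ)‖ + ‖τ * (t : ℂ) ^ n‖ := norm_sub_le _ _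
    _ ≤ 1 + ‖τ‖ := by
        rw [norm_one, norm_mul, norm_pow, Complex.norm_real, Real.norm_of_nonneg ht0.le]
        nlinarith [norm_nonneg τ, pow_le_one₀ ht0.le ht1.le (n := n)]
  set g : (Fin N → ℕ) → ℂ := fun a =>
    (∏ i, c (a i) * (y i : ℂ) ^ a i) *
      Matrix.det (Matrix.of fun i j : Fin N => (x i : ℂ) ^ a j) with hgdef
  have hyX : ∀ i, (0 : ℝ) ≤ y i * X := fun i => mul_nonneg (hy0 i).le hX0.le
  have hznorm : ∀ i j, ‖(x i : ℂ) * (y j : ℂ)‖ < 1 := by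
    intro i j
    rw [norm_mul, Complex.norm_real, Complex.norm_real,
      Real.norm_of_nonneg (hx0 i).le, Real.norm_of_nonneg (hy0 j).le]
    nlinarith [hx0 i, hx1 i, hy0 j, hy1 j]
  have htznorm : ∀ i j, ‖(t : ℂ) * ((x i : ℂ) * (y j : ℂ))‖ < 1 := by
    intro i j
    rw [norm_mul, Complex.norm_real, Real.norm_of_nonneg ht0.le]
    have h1 := hznorm i j
    have h0 := norm_nonneg ((x i : ℂ) * (y j : ℂ))
    nlinarith
  have hentry : ∀ i j, (1 / (1 - (x i : ℂ) * (y j : ℂ)) -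
      τ / (1 - (t : ℂ) * (x i : ℂ) * (y j : ℂ)))
      = ∑' n : ℕ, c n * ((x i : ℂ) * (y j : ℂ)) ^ n := by
    intro i j
    rw [mul_assoc]
    exact (entry_hasSum (hznorm i j) (htznorm i j)).tsum_eq.symm
  have hesum : ∀ i j, Summable fun n : ℕ => ‖c n * ((x i : ℂ) * (y j : ℂ)) ^ n‖ :=
    fun i j => entry_summable_norm ht0.le ht1.le τ (hznorm i j)
  -- summability of `g` over all tuples
  have hgeom : ∀ i : Fin N, Summable fun n : ℕ =>
      ‖((((1 + ‖τ‖) * (y i * X) ^ n : ℝ)) : ℂ)‖ := by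
    intro i
    have h01 : (0 : ℝ) ≤ y i * X := hyX i
    have h1 : y i * X < 1 := by nlinarith [hy0 i, hy1 i]
    apply ((summable_geometric_of_lt_one h01 h1).mul_left (1 + ‖τ‖)).congr
    intro n
    rw [Complex.norm_real, Real.norm_of_nonneg
      (mul_nonneg (by positivity) (pow_nonneg (hyX i) n))]
  have hdomsum := (pi_summable_tsum_prod N
      (fun i n => ((((1 + ‖τ‖) * (y i * X) ^ n : ℝ)) : ℂ)) hgeom).1
  have hdom' : Summable fun a : Fin N → ℕ => ∏ i, ((1 + ‖τ‖) * (y i * X) ^ a i) := by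
    apply hdomsum.congr
    intro a
    rw [show (∏ i, ((((1 + ‖τ‖) * (y i * X) ^ a i : ℝ)) : ℂ))
        = (((∏ i, (1 + ‖τ‖) * (y i * X) ^ a i : ℝ)) : ℂ) from by push_cast; rfl,
      Complex.norm_real, Real.norm_of_nonneg
      (Finset.prod_nonneg fun i _ => mul_nonneg (by positivity) (pow_nonneg (hyX i) _))]
  have hgsum : Summable fun a : Fin N → ℕ => ‖g a‖ := by
    apply Summable.of_nonneg_of_le (fun _ => norm_nonneg _) ?_
      (hdom'.mul_left (N.factorial : ℝ))
    intro a
    simp only [hgdef]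
    rw [norm_mul]
    have h1 : ‖∏ i, c (a i) * (y i : ℂ) ^ a i‖ ≤ ∏ i, ((1 + ‖τ‖) * (y i) ^ a i) := by
      rw [norm_prod]
      apply Finset.prod_le_prod (fun _ _ => norm_nonneg _)
      intro i _
      rw [norm_mul, norm_pow, Complex.norm_real, Real.norm_of_nonneg (hy0 i).le]
      have hyp : (0 : ℝ) ≤ (y i) ^ a i := pow_nonneg (hy0 i).le _
      exact mul_le_mul_of_nonneg_right (hcle (a i)) hyp
    have h2 : ‖Matrix.det (Matrix.of fun i j : Fin N => (x i : ℂ) ^ a j)‖ ≤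
        (N.factorial : ℝ) * ∏ i, X ^ a i := by
      rw [Matrix.det_apply']
      refine (norm_sum_le _ _).trans ?_
      have hbound : ∀ σ : Equiv.Perm (Fin N),
          ‖((Equiv.Perm.sign σ : ℤ) : ℂ) *
            ∏ i, (Matrix.of fun i j : Fin N => (x i : ℂ) ^ a j) (σ i) i‖ ≤ ∏ i, X ^ a i := by
        intro σ
        rw [norm_mul, norm_prod]
        have hsig : ‖((Equiv.Perm.sign σ : ℤ) : ℂ)‖ = 1 := by
          rcases Int.units_eq_one_or (Equiv.Perm.sign σ) with h | h <;> rw [h] <;> simp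
        rw [hsig, one_mul]
        apply Finset.prod_le_prod (fun _ _ => norm_nonneg _)
        intro i _
        rw [Matrix.of_apply, norm_pow, Complex.norm_real, Real.norm_of_nonneg (hx0 _).le]
        exact pow_le_pow_left₀ (hx0 _).le (hxX _) _
      refine (Finset.sum_le_sum fun σ _ => hbound σ).trans ?_
      rw [Finset.sum_const, Finset.card_univ, Fintype.card_perm, nsmul_eq_mul]
      simp [Fintype.card_fin]
    calc ‖∏ i, c (a i) * (y i : ℂ) ^ a i‖ *
          ‖Matrix.det (Matrix.of fun i j : Fin N => (x i : ℂ) ^ a j)‖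
        ≤ (∏ i, (1 + ‖τ‖) * y i ^ a i) * ((N.factorial : ℝ) * ∏ i, X ^ a i) :=
          mul_le_mul h1 h2 (norm_nonneg _) (Finset.prod_nonneg fun i _ =>
            mul_nonneg (by positivity) (pow_nonneg (hy0 i).le _))
    _ = (N.factorial : ℝ) * ∏ i, (1 + ‖τ‖) * (y i * X) ^ a i := by
          have hsplit : (∏ i, ((1 + ‖τ‖) * (y i * X) ^ a i))
              = (∏ i, (1 + ‖τ‖) * y i ^ a i) * ∏ i, X ^ a i := by
            rw [← Finset.prod_mul_distrib]
            exact Finset.prod_congr rfl fun i _ => by rw [mul_pow]; ring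
          rw [hsplit]; ring
  -- the determinant as a sum over all tuples
  have hdet : Matrix.det (Matrix.of fun i j : Fin N =>
      1 / (1 - (x i : ℂ) * (y j : ℂ)) - τ / (1 - (t : ℂ) * (x i : ℂ) * (y j : ℂ)))
      = ∑' a : Fin N → ℕ, g a := by
    rw [Matrix.det_apply']
    have hrow : ∀ σ : Equiv.Perm (Fin N),
        (∏ i, (Matrix.of fun i j : Fin N =>
          1 / (1 - (x i : ℂ) * (y j : ℂ)) - τ / (1 - (t : ℂ) * (x i : ℂ) * (y j : ℂ))) (σ i) i)
        = ∑' a : Fin N → ℕ, ∏ i, c (a i) * ((x (σ i) : ℂ) * (y i : ℂ)) ^ a i := by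
      intro σ
      rw [(pi_summable_tsum_prod N (fun i n => c n * ((x (σ i) : ℂ) * (y i : ℂ)) ^ n)
        (fun i => hesum (σ i) i)).2]
      exact Finset.prod_congr rfl fun i _ => by rw [Matrix.of_apply]; exact hentry (σ i) i
    calc (∑ σ : Equiv.Perm (Fin N), ((Equiv.Perm.sign σ : ℤ) : ℂ) *
          ∏ i, (Matrix.of fun i j : Fin N =>
          1 / (1 - (x i : ℂ) * (y j : ℂ)) - τ / (1 - (t : ℂ) * (x i : ℂ) * (y j : ℂ))) (σ i) i)
        = ∑ σ : Equiv.Perm (Fin N), ∑' a : Fin N → ℕ,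
          ((Equiv.Perm.sign σ : ℤ) : ℂ) * ∏ i, c (a i) * ((x (σ i) : ℂ) * (y i : ℂ)) ^ a i := by
          refine Finset.sum_congr rfl fun σ _ => ?_
          rw [hrow σ, tsum_mul_left]
    _ = ∑' a : Fin N → ℕ, ∑ σ : Equiv.Perm (Fin N),
          ((Equiv.Perm.sign σ : ℤ) : ℂ) * ∏ i, c (a i) * ((x (σ i) : ℂ) * (y i : ℂ)) ^ a i := by
          refine (Summable.tsum_finsetSum fun σ _ => ?_).symm
          exact ((pi_summable_tsum_prod N (fun i n => c n * ((x (σ i) : ℂ) * (y i : ℂ)) ^ n)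
            (fun i => hesum (σ i) i)).1.of_norm.mul_left _)
    _ = ∑' a : Fin N → ℕ, g a := by
          refine tsum_congr fun a => ?_
          have hsplit : ∀ σ : Equiv.Perm (Fin N),
              (∏ i, c (a i) * ((x (σ i) : ℂ) * (y i : ℂ)) ^ a i)
              = (∏ i, c (a i) * (y i : ℂ) ^ a i) *
                ∏ i, (Matrix.of fun i j : Fin N => (x i : ℂ) ^ a j) (σ i) i := by
            intro σ
            rw [← Finset.prod_mul_distrib]
            refine Finset.prod_congr rfl fun i _ => ?_
            rw [Matrix.of_apply, mul_pow]
            ring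
          simp only [hgdef]
          rw [Matrix.det_apply', Finset.mul_sum]
          refine Finset.sum_congr rfl fun σ _ => ?_
          rw [hsplit σ]; ring
  -- support of g is contained in injective tuples
  have hzero : ∀ a : Fin N → ℕ, ¬ Function.Injective a → g a = 0 := by
    intro a hinj
    rw [Function.Injective] at hinj
    push_neg at hinj
    obtain ⟨i, j, hval, hne'⟩ := hinj
    have hd : Matrix.det (Matrix.of fun i' j' : Fin N => (x i' : ℂ) ^ a j') = 0 :=
      Matrix.det_zero_of_column_eq hne' (fun k => by simp [hval])
    simp only [hgdef]
    rw [hd, mul_zero]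
  have hsupp : Function.support g ⊆ {a : Fin N → ℕ | Function.Injective a} := by
    intro a ha
    by_contra hins
    exact ha (hzero a hins)
  have step1 : (∑' a : Fin N → ℕ, g a)
      = ∑' a : {a : Fin N → ℕ // Function.Injective a}, g a.1 :=
    (tsum_subtype_eq_of_support_subset hsupp).symm
  have step2 : (∑' a : {a : Fin N → ℕ // Function.Injective a}, g a.1)
      = ∑' p : {s : Fin N → ℕ // StrictMono s} × Equiv.Perm (Fin N), g (p.1.1 ∘ p.2) := by
    rw [← (strictMonoPermEquiv N).tsum_eq (fun a => g a.1)]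
    exact tsum_congr fun p => congrArg g (strictMonoPermEquiv_apply N p)
  have hsum_pairs : Summable fun p : {s : Fin N → ℕ // StrictMono s} × Equiv.Perm (Fin N) =>
      g (p.1.1 ∘ p.2) := by
    have h1 : Summable fun a : {a : Fin N → ℕ // Function.Injective a} => g a.1 :=
      (hgsum.of_norm).comp_injective Subtype.coe_injective
    have h2 := ((strictMonoPermEquiv N).summable_iff (f := fun a : {a : Fin N → ℕ // Function.Injective a} => g a.1)).mpr h1
    exact h2.congr fun p => congrArg g (strictMonoPermEquiv_apply N p)
  have step3 : (∑' p : {s : Fin N → ℕ // StrictMono s} × Equiv.Perm (Fin N), g (p.1.1 ∘ p.2))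
      = ∑' s : {s : Fin N → ℕ // StrictMono s}, ∑ σ : Equiv.Perm (Fin N), g (s.1 ∘ σ) := by
    rw [Summable.tsum_prod' hsum_pairs (fun s => Summable.of_finite)]
    exact tsum_congr fun s => tsum_fintype _
  -- the per-tuple identity
  have hterm : ∀ s : {s : Fin N → ℕ // StrictMono s},
      (∑ σ : Equiv.Perm (Fin N), g (s.1 ∘ σ)) = cauchyBinetTerm N t τ x y s.1 := by
    intro s
    have hdetx : ∀ σ : Equiv.Perm (Fin N),
        Matrix.det (Matrix.of fun i j : Fin N => (x i : ℂ) ^ s.1 (σ j))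
        = ((Equiv.Perm.sign σ : ℤ) : ℂ) *
          Matrix.det (Matrix.of fun i j : Fin N => (x i : ℂ) ^ s.1 j) := by
      intro σ
      have hsub : (Matrix.of fun i j : Fin N => (x i : ℂ) ^ s.1 (σ j))
          = (Matrix.of fun i j : Fin N => (x i : ℂ) ^ s.1 j).submatrix id σ := by
        ext i j
        simp [Matrix.submatrix_apply]
      rw [hsub, Matrix.det_permute']
    have hcomp_prod : ∀ σ : Equiv.Perm (Fin N),
        (∏ i, c (s.1 (σ i)) * (y i : ℂ) ^ s.1 (σ i))
        = (∏ i, c (s.1 i)) * ∏ i, (y i : ℂ) ^ s.1 (σ i) := by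
      intro σ
      rw [Finset.prod_mul_distrib]
      congr 1
      exact Equiv.prod_comp σ fun i => c (s.1 i)
    have hdety : (∑ σ : Equiv.Perm (Fin N),
        ((Equiv.Perm.sign σ : ℤ) : ℂ) * ∏ i, (y i : ℂ) ^ s.1 (σ i))
        = Matrix.det (Matrix.of fun i j : Fin N => (y i : ℂ) ^ s.1 j) := by
      rw [← Matrix.det_transpose, Matrix.det_apply']
      refine (Finset.sum_congr rfl fun σ _ => ?_).symm
      congr 1
    calc (∑ σ : Equiv.Perm (Fin N), g (s.1 ∘ σ))
        = ∑ σ : Equiv.Perm (Fin N), (∏ i, c (s.1 i)) *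
          Matrix.det (Matrix.of fun i j : Fin N => (x i : ℂ) ^ s.1 j) *
          (((Equiv.Perm.sign σ : ℤ) : ℂ) * ∏ i, (y i : ℂ) ^ s.1 (σ i)) := by
          refine Finset.sum_congr rfl fun σ _ => ?_
          simp only [hgdef, Function.comp_apply]
          rw [hcomp_prod σ, hdetx σ]
          ring
    _ = (∏ i, c (s.1 i)) * Matrix.det (Matrix.of fun i j : Fin N => (x i : ℂ) ^ s.1 j) *
          ∑ σ : Equiv.Perm (Fin N),
            (((Equiv.Perm.sign σ : ℤ) : ℂ) * ∏ i, (y i : ℂ) ^ s.1 (σ i)) := by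
          rw [← Finset.mul_sum]
    _ = cauchyBinetTerm N t τ x y s.1 := by
          rw [hdety]
          rfl
  -- summability of the stated series
  have htermsum : Summable fun s : {a : Fin N → ℕ // StrictMono a} =>
      ‖cauchyBinetTerm N t τ x y s.1‖ := by
    have hb : ∀ s : {a : Fin N → ℕ // StrictMono a},
        ‖cauchyBinetTerm N t τ x y s.1‖ ≤ ∑ σ : Equiv.Perm (Fin N), ‖g (s.1 ∘ σ)‖ := by
      intro s
      rw [← hterm s]
      exact norm_sum_le _ _
    have hsummand : ∀ σ : Equiv.Perm (Fin N),
        Summable fun s : {a : Fin N → ℕ // StrictMono a} => ‖g (s.1 ∘ σ)‖ := by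
      intro σ
      apply hgsum.comp_injective
      intro s s' h
      apply Subtype.ext
      funext i
      have := congrFun h (σ.symm i)
      simpa using this
    exact Summable.of_nonneg_of_le (fun _ => norm_nonneg _) hb
      (summable_sum fun σ _ => hsummand σ)
  refine ⟨htermsum, ?_⟩
  rw [hdet, step1, step2, step3]
  exact tsum_congr hterm
end

section
/- Let N ≥ 1 be an integer, t ∈ (0,1), k a nonnegative integer, x₁,…,x_N ∈ (0,1) pairwise distinct, and y₁,…,y_N ∈ (0,1) pairwise distinct. Then ∏_{1≤i<j≤N} (x_i−x_j)^{−1}(y_i−y_j)^{−1} · det_{1≤i,j≤N}[(1 − t^{k+1} − t(1−t^k) x_i y_j)/((1−x_i y_j)(1−t x_i y_j))] = Σ_{λ} ∏_{i=1}^{N} (1 − t^{k+1+λ_i−i+N}) · s_λ(x₁,…,x_N) · s_λ(y₁,…,y_N), where the sum is over all partitions λ = (λ₁ ≥ λ₂ ≥ ⋯ ≥ λ_N ≥ 0) with at most N parts, and it converges absolutely. -/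
open Filter Finset
open Topology


lemma hasSum_kernel (k : ℕ) (b a : ℂ) (ha : ‖a‖ < 1) (hba : ‖b * a‖ < 1) :
    HasSum (fun n : ℕ => (1 - b ^ (k + 1 + n)) * a ^ n)
      ((1 - b ^ (k + 1) - b * (1 - b ^ k) * a) / ((1 - a) * (1 - b * a))) := by
  have ha1 : (1 : ℂ) - a ≠ 0 := by
    intro h; rw [sub_eq_zero] at h; rw [← h] at ha; simp at ha
  have hba1 : (1 : ℂ) - b * a ≠ 0 := by
    intro h; rw [sub_eq_zero] at h; rw [← h] at hba; simp at hba
  have h1 : HasSum (fun n : ℕ => a ^ n) (1 - a)⁻¹ := hasSum_geometric_of_norm_lt_one ha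
  have h2 : HasSum (fun n : ℕ => b ^ (k + 1) * (b * a) ^ n) (b ^ (k + 1) * (1 - b * a)⁻¹) :=
    (hasSum_geometric_of_norm_lt_one hba).mul_left _
  have h3 := h1.sub h2
  have hfun : (fun n : ℕ => (1 - b ^ (k + 1 + n)) * a ^ n)
      = fun n : ℕ => a ^ n - b ^ (k + 1) * (b * a) ^ n := by
    funext n; rw [mul_pow, pow_add]; ring
  have hval : (1 - b ^ (k + 1) - b * (1 - b ^ k) * a) / ((1 - a) * (1 - b * a))
      = (1 - a)⁻¹ - b ^ (k + 1) * (1 - b * a)⁻¹ := by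
    field_simp
    ring
  rw [hfun, hval]; exact h3

lemma summable_pi_pow {N : ℕ} {ρ : ℝ} (h0 : 0 ≤ ρ) (h1 : ρ < 1) :
    Summable (fun n : Fin N → ℕ => ∏ j, ρ ^ (n j)) := by
  induction N with
  | zero => exact .of_finite
  | succ m ih =>
    have hg : Summable (fun n : ℕ => ρ ^ n) := summable_geometric_of_lt_one h0 h1
    have hmul := hg.mul_of_nonneg ih (fun n => pow_nonneg h0 n)
      (fun n => Finset.prod_nonneg fun j _ => pow_nonneg h0 _)
    have := (Fin.consEquiv (fun _ : Fin (m+1) => ℕ)).summable_iff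
      (f := fun n : Fin (m+1) → ℕ => ∏ j, ρ ^ (n j))
    rw [← this]
    convert hmul using 1
    funext p
    simp only [Function.comp, Fin.consEquiv_apply]
    rw [Fin.prod_univ_succ]
    simp


lemma strictAnti_add_le' {N : ℕ} {n : Fin N → ℕ} (h : StrictAnti n) :
    ∀ (d : ℕ) (a b : Fin N), (b : ℕ) = (a : ℕ) + d → n b + d ≤ n a := by
  intro d
  induction d with
  | zero =>
    intro a b hb
    have : a = b := Fin.ext (by omega)
    subst this; omega
  | succ m ih =>
    intro a b hb
    have hm : (a : ℕ) + m < N := by have := b.isLt; omega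
    have h1 : n b < n ⟨(a : ℕ) + m, hm⟩ := by
      apply h
      rw [Fin.lt_def]
      simp only []
      omega
    have h2 := ih a ⟨(a : ℕ) + m, hm⟩ rfl
    omega

lemma strictAnti_add_le {N : ℕ} {n : Fin N → ℕ} (h : StrictAnti n) (a b : Fin N)
    (hab : a ≤ b) : n b + ((b : ℕ) - (a : ℕ)) ≤ n a :=
  strictAnti_add_le' h ((b : ℕ) - (a : ℕ)) a b (by have := Fin.le_def.mp hab; omega)

lemma det_pow_norm_bound (N : ℕ) (z : Fin N → ℝ) (Z : ℝ) (hz0 : ∀ i, 0 ≤ z i)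
    (hzZ : ∀ i, z i ≤ Z) (n : Fin N → ℕ) :
    ‖Matrix.det (Matrix.of fun i j : Fin N => ((z i : ℝ) : ℂ) ^ (n j))‖
      ≤ N.factorial * ∏ j, Z ^ (n j) := by
  rw [Matrix.det_apply']
  refine le_trans (norm_sum_le _ _) ?_
  have hterm : ∀ σ : Equiv.Perm (Fin N),
      ‖((Equiv.Perm.sign σ : ℤ) : ℂ) * ∏ i, (Matrix.of fun i j : Fin N => ((z i : ℝ) : ℂ) ^ (n j)) (σ i) i‖
        ≤ ∏ j, Z ^ (n j) := by
    intro σ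
    rw [norm_mul]
    have hsgn : ‖((Equiv.Perm.sign σ : ℤ) : ℂ)‖ = 1 := by
      rcases Int.units_eq_one_or (Equiv.Perm.sign σ) with h | h <;> rw [h] <;> simp
    rw [hsgn, one_mul, norm_prod]
    have : ∀ i : Fin N, ‖(Matrix.of fun i j : Fin N => ((z i : ℝ) : ℂ) ^ (n j)) (σ i) i‖
        = z (σ i) ^ (n i) := by
      intro i
      simp only [Matrix.of_apply, norm_pow, Complex.norm_real]
      rw [Real.norm_eq_abs, abs_of_nonneg (hz0 _)]
    rw [Finset.prod_congr rfl fun i _ => this i]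
    exact Finset.prod_le_prod (fun i _ => pow_nonneg (hz0 _) _)
      (fun i _ => pow_le_pow_left₀ (hz0 _) (hzZ _) _)
  calc ∑ σ : Equiv.Perm (Fin N), ‖_‖ ≤ ∑ σ : Equiv.Perm (Fin N), ∏ j, Z ^ (n j) :=
        Finset.sum_le_sum fun σ _ => hterm σ
    _ = N.factorial * ∏ j, Z ^ (n j) := by
        rw [Finset.sum_const, Finset.card_univ, Fintype.card_perm, Fintype.card_fin,
          nsmul_eq_mul]

noncomputable section

variable {N : ℕ}

/-- sorting permutation putting `r` in decreasing order -/
def sortAnti (r : Fin N → ℕ) : Equiv.Perm (Fin N) :=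
  (Fin.revPerm).trans (Tuple.sort r)

lemma strictAnti_comp_sortAnti {r : Fin N → ℕ} (hr : Function.Injective r) :
    StrictAnti (r ∘ ⇑(sortAnti r)) := by
  have hm : Monotone (r ∘ ⇑(Tuple.sort r)) := Tuple.monotone_sort r
  have hsm : StrictMono (r ∘ ⇑(Tuple.sort r)) :=
    hm.strictMono_of_injective (hr.comp (Equiv.injective _))
  have hrev : StrictAnti (Fin.rev : Fin N → Fin N) := fun a b h => by
    simpa using (Fin.rev_lt_rev).mpr h
  have : r ∘ ⇑(sortAnti r) = (r ∘ ⇑(Tuple.sort r)) ∘ Fin.rev := rfl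
  rw [this]
  exact hsm.comp_strictAnti hrev

lemma sortAnti_unique {n : Fin N → ℕ} (σ : Equiv.Perm (Fin N)) (hn : StrictAnti n) :
    (n ∘ ⇑σ) ∘ ⇑(sortAnti (n ∘ ⇑σ)) = n ∧ sortAnti (n ∘ ⇑σ) = σ⁻¹ := by
  set r : Fin N → ℕ := n ∘ ⇑σ with hrdef
  have hrinj : Function.Injective r := hn.injective.comp σ.injective
  have hA : StrictAnti (r ∘ ⇑(sortAnti r)) := strictAnti_comp_sortAnti hrinj
  have hB : r ∘ ⇑(σ⁻¹) = n := by funext j; simp [hrdef]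
  have hmono1 : Monotone ((fun j => OrderDual.toDual (r j)) ∘ ⇑(sortAnti r)) :=
    hA.antitone.dual_right
  have hmono2 : Monotone ((fun j => OrderDual.toDual (r j)) ∘ ⇑(σ⁻¹)) := by
    have : Antitone (r ∘ ⇑(σ⁻¹)) := hB ▸ hn.antitone
    exact this.dual_right
  have hkey := Tuple.unique_monotone hmono1 hmono2
  have hfun : r ∘ ⇑(sortAnti r) = n := by
    rw [← hB]; funext j; exact congrFun hkey j
  refine ⟨hfun, ?_⟩
  ext j
  have h1 := congrFun hfun j
  simp only [Function.comp_apply, hrdef] at h1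
  have h2 := hn.injective h1
  have h3 : (sortAnti r) j = σ⁻¹ j := by
    apply σ.injective; simpa using h2
  exact congrArg Fin.val h3



lemma det_sum_expand (N : ℕ) (c : ℕ → ℂ) (x y : Fin N → ℂ) (M : ℕ) :
    Matrix.det (Matrix.of fun i j : Fin N => ∑ n ∈ Finset.range M, c n * x i ^ n * y j ^ n)
    = ∑ n ∈ (Fintype.piFinset fun _ : Fin N => Finset.range M).filter
        (fun n => ∀ i j : Fin N, i < j → n j < n i),
      (∏ i, c (n i)) * Matrix.det (Matrix.of fun i j : Fin N => x i ^ (n j))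
        * Matrix.det (Matrix.of fun i j : Fin N => y i ^ (n j)) := by
  classical
  set f := (Matrix.detRowAlternating : (Fin N → ℂ) [⋀^Fin N]→ₗ[ℂ] ℂ) with hf
  -- Step 1: expand det as multilinear image of sums of rows (of the transpose)
  have h1 : (Matrix.of fun i j : Fin N => ∑ n ∈ Finset.range M, c n * x i ^ n * y j ^ n).det
      = f (fun j => ∑ n ∈ Finset.range M, (c n * y j ^ n) • fun i : Fin N => x i ^ n) := by
    rw [← Matrix.det_transpose]
    show f _ = f _
    congr 1
    funext j i
    simp only [Matrix.transpose_apply, Matrix.of_apply, Finset.sum_apply, Pi.smul_apply,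
      smul_eq_mul]
    exact Finset.sum_congr rfl fun n _ => by ring
  set g : (Fin N → ℕ) → ℂ := fun r =>
    (∏ j, c (r j) * y j ^ (r j)) * Matrix.det (Matrix.of fun i j : Fin N => x i ^ (r j))
    with hg
  have h2 : (Matrix.of fun i j : Fin N => ∑ n ∈ Finset.range M, c n * x i ^ n * y j ^ n).det
      = ∑ r ∈ Fintype.piFinset fun _ : Fin N => Finset.range M, g r := by
    rw [h1]
    have hm := f.toMultilinearMap.map_sum_finset
      (fun j n => (c n * y j ^ n) • fun i : Fin N => x i ^ n) (fun _ => Finset.range M)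
    simp only [AlternatingMap.coe_multilinearMap] at hm
    rw [hm]
    refine Finset.sum_congr rfl fun r _ => ?_
    have h3 : (f fun j => (c (r j) * y j ^ (r j)) • fun i : Fin N => x i ^ (r j))
        = (∏ j, c (r j) * y j ^ (r j)) • f (fun j => fun i : Fin N => x i ^ (r j)) := by
      have := f.toMultilinearMap.map_smul_univ (fun j => c (r j) * y j ^ (r j))
        (fun j => fun i : Fin N => x i ^ (r j))
      simpa using this
    rw [h3, smul_eq_mul, hg]
    congr 1
    rw [← Matrix.det_transpose]
    rfl
  have h5 : ∑ r ∈ Fintype.piFinset fun _ : Fin N => Finset.range M, g r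
      = ∑ r ∈ (Fintype.piFinset fun _ : Fin N => Finset.range M).filter
          (fun r => Function.Injective r), g r := by
    symm
    apply Finset.sum_subset (Finset.filter_subset _ _)
    intro r hr hnr
    have : ¬ Function.Injective r := by
      intro h; exact hnr (Finset.mem_filter.mpr ⟨hr, h⟩)
    rw [Function.not_injective_iff] at this
    obtain ⟨a, b, hab, hne⟩ := this
    have hdet0 : Matrix.det (Matrix.of fun i j : Fin N => x i ^ (r j)) = 0 := by
      apply Matrix.det_zero_of_column_eq hne
      intro i; simp [hab]
    simp [hg, hdet0]
  have hdetY : ∀ n : Fin N → ℕ, Matrix.det (Matrix.of fun i j : Fin N => y i ^ (n j))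
      = ∑ σ : Equiv.Perm (Fin N), ((Equiv.Perm.sign σ : ℤ) : ℂ) * ∏ j, y j ^ (n (σ j)) := by
    intro n
    rw [Matrix.det_apply']
    rw [← Equiv.sum_comp (Equiv.inv (Equiv.Perm (Fin N)))
      (fun σ => ((Equiv.Perm.sign σ : ℤ) : ℂ) * ∏ j, y j ^ (n (σ j)))]
    refine Finset.sum_congr rfl fun σ _ => ?_
    simp only [Equiv.inv_apply]
    rw [Equiv.Perm.sign_inv]
    congr 1
    rw [← Equiv.prod_comp σ (fun j => y j ^ n ((σ⁻¹ : Equiv.Perm (Fin N)) j))]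
    exact Finset.prod_congr rfl fun j _ => by simp
  rw [h2, h5]
  symm
  calc ∑ n ∈ (Fintype.piFinset fun _ : Fin N => Finset.range M).filter
        (fun n => ∀ i j : Fin N, i < j → n j < n i),
      (∏ i, c (n i)) * Matrix.det (Matrix.of fun i j : Fin N => x i ^ (n j))
        * Matrix.det (Matrix.of fun i j : Fin N => y i ^ (n j))
      = ∑ n ∈ (Fintype.piFinset fun _ : Fin N => Finset.range M).filter
          (fun n => ∀ i j : Fin N, i < j → n j < n i), ∑ σ : Equiv.Perm (Fin N),
          (∏ i, c (n i)) * Matrix.det (Matrix.of fun i j : Fin N => x i ^ (n j))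
            * (((Equiv.Perm.sign σ : ℤ) : ℂ) * ∏ j, y j ^ (n (σ j))) := by
        refine Finset.sum_congr rfl fun n _ => ?_
        rw [hdetY n, Finset.mul_sum]
    _ = ∑ p ∈ ((Fintype.piFinset fun _ : Fin N => Finset.range M).filter
          (fun n => ∀ i j : Fin N, i < j → n j < n i)) ×ˢ (Finset.univ : Finset (Equiv.Perm (Fin N))),
          (∏ i, c (p.1 i)) * Matrix.det (Matrix.of fun i j : Fin N => x i ^ (p.1 j))
            * (((Equiv.Perm.sign p.2 : ℤ) : ℂ) * ∏ j, y j ^ (p.1 (p.2 j))) := by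
        rw [Finset.sum_product]
    _ = ∑ r ∈ (Fintype.piFinset fun _ : Fin N => Finset.range M).filter
          (fun r => Function.Injective r), g r := by
        refine Finset.sum_nbij' (fun p => p.1 ∘ ⇑p.2)
          (fun r => (r ∘ ⇑(sortAnti r), (sortAnti r)⁻¹)) ?_ ?_ ?_ ?_ ?_
        · rintro ⟨n, σ⟩ hp
          simp only [Finset.mem_product, Finset.mem_filter, Fintype.mem_piFinset] at hp
          obtain ⟨⟨hmem, hanti⟩, -⟩ := hp
          have hsa : StrictAnti n := fun a b h => hanti a b h
          refine Finset.mem_filter.mpr ⟨Fintype.mem_piFinset.mpr fun j => hmem _, ?_⟩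
          exact hsa.injective.comp σ.injective
        · intro r hr
          simp only [Finset.mem_filter, Fintype.mem_piFinset] at hr
          obtain ⟨hmem, hinj⟩ := hr
          have hsa := strictAnti_comp_sortAnti hinj
          refine Finset.mem_product.mpr ⟨Finset.mem_filter.mpr
            ⟨Fintype.mem_piFinset.mpr fun j => hmem _, fun a b h => hsa h⟩, Finset.mem_univ _⟩
        · rintro ⟨n, σ⟩ hp
          simp only [Finset.mem_product, Finset.mem_filter, Fintype.mem_piFinset] at hp
          obtain ⟨⟨hmem, hanti⟩, -⟩ := hp
          have hsa : StrictAnti n := fun a b h => hanti a b h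
          obtain ⟨hcomp, hperm⟩ := sortAnti_unique σ hsa
          rw [Prod.mk.injEq]
          constructor
          · exact hcomp
          · rw [hperm]; simp
        · intro r hr
          funext j
          simp
        · rintro ⟨n, σ⟩ hp
          simp only [hg]
          have hc : ∏ j, c ((n ∘ ⇑σ) j) = ∏ i, c (n i) := Equiv.prod_comp σ (fun j => c (n j))
          have hyy : ∏ j, (fun j => c ((n ∘ ⇑σ) j) * y j ^ ((n ∘ ⇑σ) j)) j
              = (∏ i, c (n i)) * ∏ j, y j ^ (n (σ j)) := by
            rw [Finset.prod_mul_distrib, hc]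
            rfl
          have hxx : Matrix.det (Matrix.of fun i j : Fin N => x i ^ ((n ∘ ⇑σ) j))
              = ((Equiv.Perm.sign σ : ℤ) : ℂ)
                * Matrix.det (Matrix.of fun i j : Fin N => x i ^ (n j)) := by
            have := Matrix.det_permute' σ (Matrix.of fun i j : Fin N => x i ^ (n j))
            rw [show ((Matrix.of fun i j : Fin N => x i ^ (n j)).submatrix id ⇑σ)
              = Matrix.of fun i j : Fin N => x i ^ ((n ∘ ⇑σ) j) from rfl] at this
            rw [this]
          rw [hyy, hxx]
          ring
end


/-- The Schur polynomial `s_λ(x₁,…,x_N)` of a partition `λ` (a weakly decreasing tuple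
`lam : Fin N → ℕ`, zero-indexed), defined as `det[x_i^{λ_j + N - j}]` (with `1 ≤ i,j ≤ N`,
i.e. exponent `lam j + (N - 1 - j)` in zero-indexed form) divided by the Vandermonde
determinant `∏_{i<j}(x_i - x_j)`. -/
noncomputable def schurPoly (N : ℕ) (x : Fin N → ℂ) (lam : Fin N → ℕ) : ℂ :=
  Matrix.det (Matrix.of fun i j : Fin N => x i ^ (lam j + (N - 1 - (j : ℕ)))) /
    ∏ i : Fin N, ∏ j ∈ Finset.Ioi i, (x i - x j)

/-- The term of the Schur expansion indexed by a partition `λ` with at most `N` parts: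
`∏_{i=1}^N (1 - t^{k+1+λ_i-i+N}) · s_λ(x) · s_λ(y)`; in zero-indexed form the exponent
`k+1+λ_i-i+N` becomes `k + lam i + (N - i)`. -/
noncomputable def schurExpansionTerm (N : ℕ) (t : ℝ) (k : ℕ) (x y : Fin N → ℝ)
    (lam : Fin N → ℕ) : ℂ :=
  (∏ i : Fin N, (1 - (t : ℂ) ^ (k + lam i + (N - (i : ℕ))))) *
    schurPoly N (fun i => (x i : ℂ)) lam * schurPoly N (fun i => (y i : ℂ)) lam

/-- the Schur expansion of the normalized determinant
`∏_{i<j}(x_i-x_j)⁻¹(y_i-y_j)⁻¹ · det[(1 - t^{k+1} - t(1-t^k)x_i y_j)/((1-x_i y_j)(1-t x_i y_j))]`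
over partitions with at most `N` parts; the series converges absolutely. -/
theorem det_schur_expansion (N : ℕ) (hN : 1 ≤ N) (t : ℝ) (ht0 : 0 < t) (ht1 : t < 1)
    (k : ℕ) (x y : Fin N → ℝ) (hx : ∀ i, x i ∈ Set.Ioo (0 : ℝ) 1)
    (hy : ∀ i, y i ∈ Set.Ioo (0 : ℝ) 1)
    (hxdist : Function.Injective x) (hydist : Function.Injective y) :
    Summable (fun lam : {l : Fin N → ℕ // Antitone l} => ‖schurExpansionTerm N t k x y lam.1‖) ∧
    (∏ i : Fin N, ∏ j ∈ Finset.Ioi i, (((x i : ℂ) - (x j : ℂ))⁻¹ * ((y i : ℂ) - (y j : ℂ))⁻¹)) *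
      Matrix.det (Matrix.of fun i j : Fin N =>
        (1 - (t : ℂ) ^ (k + 1) - (t : ℂ) * (1 - (t : ℂ) ^ k) * (x i : ℂ) * (y j : ℂ)) /
          ((1 - (x i : ℂ) * (y j : ℂ)) * (1 - (t : ℂ) * (x i : ℂ) * (y j : ℂ)))) =
      ∑' lam : {l : Fin N → ℕ // Antitone l}, schurExpansionTerm N t k x y lam.1 := by
  classical
  have hNpos : 0 < N := hN
  have hne : Nonempty (Fin N) := ⟨⟨0, hNpos⟩⟩
  have hx0 : ∀ i, 0 < x i := fun i => (hx i).1
  have hx1 : ∀ i, x i < 1 := fun i => (hx i).2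
  have hy0 : ∀ i, 0 < y i := fun i => (hy i).1
  have hy1 : ∀ i, y i < 1 := fun i => (hy i).2
  set c : ℕ → ℂ := fun n => 1 - (t : ℂ) ^ (k + 1 + n) with hcdef
  set Vx : ℂ := ∏ i : Fin N, ∏ j ∈ Finset.Ioi i, ((x i : ℂ) - (x j : ℂ)) with hVxdef
  set Vy : ℂ := ∏ i : Fin N, ∏ j ∈ Finset.Ioi i, ((y i : ℂ) - (y j : ℂ)) with hVydef
  have hVx : Vx ≠ 0 := by
    rw [hVxdef, Finset.prod_ne_zero_iff]
    intro i _
    rw [Finset.prod_ne_zero_iff]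
    intro j hj
    rw [sub_ne_zero]
    intro hcast
    have := hxdist (Complex.ofReal_inj.mp hcast)
    exact (ne_of_lt (Finset.mem_Ioi.mp hj)) this
  have hVy : Vy ≠ 0 := by
    rw [hVydef, Finset.prod_ne_zero_iff]
    intro i _
    rw [Finset.prod_ne_zero_iff]
    intro j hj
    rw [sub_ne_zero]
    intro hcast
    have := hydist (Complex.ofReal_inj.mp hcast)
    exact (ne_of_lt (Finset.mem_Ioi.mp hj)) this
  -- bounds
  set X : ℝ := Finset.univ.sup' Finset.univ_nonempty x with hXdef
  set Y : ℝ := Finset.univ.sup' Finset.univ_nonempty y with hYdef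
  have hXle : ∀ i, x i ≤ X := fun i => Finset.le_sup' x (Finset.mem_univ i)
  have hYle : ∀ i, y i ≤ Y := fun i => Finset.le_sup' y (Finset.mem_univ i)
  have hX1 : X < 1 := (Finset.sup'_lt_iff _).mpr fun i _ => hx1 i
  have hY1 : Y < 1 := (Finset.sup'_lt_iff _).mpr fun i _ => hy1 i
  have hX0 : 0 ≤ X := le_trans (hx0 ⟨0, hNpos⟩).le (hXle _)
  have hY0 : 0 ≤ Y := le_trans (hy0 ⟨0, hNpos⟩).le (hYle _)
  set ρ : ℝ := X * Y with hρdef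
  have hρ0 : 0 ≤ ρ := mul_nonneg hX0 hY0
  have hρ1 : ρ < 1 := by nlinarith
  -- bound on coefficient product
  have hcnorm : ∀ e : ℕ, ‖(1 : ℂ) - (t : ℂ) ^ e‖ ≤ 1 := by
    intro e
    rw [show (1 : ℂ) - (t : ℂ) ^ e = (((1 - t ^ e : ℝ)) : ℂ) by push_cast; ring,
      Complex.norm_real, Real.norm_eq_abs, abs_le]
    constructor <;> nlinarith [pow_nonneg ht0.le e, pow_le_one₀ ht0.le ht1.le (n := e)]
  set C : ℝ := (N.factorial * ‖Vx‖⁻¹) * (N.factorial * ‖Vy‖⁻¹) with hCdef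
  have hbound : ∀ lam : {l : Fin N → ℕ // Antitone l},
      ‖schurExpansionTerm N t k x y lam.1‖
        ≤ C * ∏ j, ρ ^ (lam.1 j + (N - 1 - (j : ℕ))) := by
    intro lam
    have b1 : ‖∏ i : Fin N, (1 - (t : ℂ) ^ (k + lam.1 i + (N - (i : ℕ))))‖ ≤ 1 := by
      rw [norm_prod]
      exact Finset.prod_le_one (fun _ _ => norm_nonneg _) (fun i _ => hcnorm _)
    have b2 : ‖schurPoly N (fun i => (x i : ℂ)) lam.1‖
        ≤ (N.factorial * ∏ j, X ^ (lam.1 j + (N - 1 - (j : ℕ)))) * ‖Vx‖⁻¹ := by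
      unfold schurPoly
      rw [norm_div, div_eq_mul_inv]
      exact mul_le_mul_of_nonneg_right
        (det_pow_norm_bound N x X (fun i => (hx0 i).le) hXle _)
        (inv_nonneg.mpr (norm_nonneg _))
    have b3 : ‖schurPoly N (fun i => (y i : ℂ)) lam.1‖
        ≤ (N.factorial * ∏ j, Y ^ (lam.1 j + (N - 1 - (j : ℕ)))) * ‖Vy‖⁻¹ := by
      unfold schurPoly
      rw [norm_div, div_eq_mul_inv]
      exact mul_le_mul_of_nonneg_right
        (det_pow_norm_bound N y Y (fun i => (hy0 i).le) hYle _)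
        (inv_nonneg.mpr (norm_nonneg _))
    have hXY : (∏ j, X ^ (lam.1 j + (N - 1 - (j : ℕ))))
        * (∏ j, Y ^ (lam.1 j + (N - 1 - (j : ℕ))))
        = ∏ j, ρ ^ (lam.1 j + (N - 1 - (j : ℕ))) := by
      rw [← Finset.prod_mul_distrib]
      exact Finset.prod_congr rfl fun j _ => (mul_pow _ _ _).symm
    unfold schurExpansionTerm
    rw [norm_mul, norm_mul]
    calc ‖∏ i : Fin N, (1 - (t : ℂ) ^ (k + lam.1 i + (N - (i : ℕ))))‖
          * ‖schurPoly N (fun i => (x i : ℂ)) lam.1‖ * ‖schurPoly N (fun i => (y i : ℂ)) lam.1‖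
        ≤ 1 * ((N.factorial * ∏ j, X ^ (lam.1 j + (N - 1 - (j : ℕ)))) * ‖Vx‖⁻¹)
          * ((N.factorial * ∏ j, Y ^ (lam.1 j + (N - 1 - (j : ℕ)))) * ‖Vy‖⁻¹) := by
          have h2 := mul_le_mul b1 b2 (norm_nonneg _) zero_le_one
          refine mul_le_mul h2 b3 (norm_nonneg _) ?_
          positivity
      _ = C * ∏ j, ρ ^ (lam.1 j + (N - 1 - (j : ℕ))) := by
          rw [hCdef, ← hXY]; ring
  -- summability
  have hinj : Function.Injective (fun lam : {l : Fin N → ℕ // Antitone l} =>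
      (fun j => lam.1 j + (N - 1 - (j : ℕ)) : Fin N → ℕ)) := by
    intro a b h
    apply Subtype.ext
    funext j
    have := congrFun h j
    simpa using this
  have hsumaux : Summable (fun n : Fin N → ℕ => C * ∏ j, ρ ^ (n j)) :=
    (summable_pi_pow hρ0 hρ1).mul_left _
  have hsumbound : Summable (fun lam : {l : Fin N → ℕ // Antitone l} =>
      C * ∏ j, ρ ^ (lam.1 j + (N - 1 - (j : ℕ)))) :=
    hsumaux.comp_injective hinj
  have hsum : Summable (fun lam : {l : Fin N → ℕ // Antitone l} =>
      ‖schurExpansionTerm N t k x y lam.1‖) :=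
    Summable.of_nonneg_of_le (fun _ => norm_nonneg _) hbound hsumbound
  refine ⟨hsum, ?_⟩
  have hsum' : Summable (fun lam : {l : Fin N → ℕ // Antitone l} =>
      schurExpansionTerm N t k x y lam.1) := hsum.of_norm
  set S : ℂ := ∑' lam : {l : Fin N → ℕ // Antitone l}, schurExpansionTerm N t k x y lam.1
    with hSdef
  have hS : HasSum (fun lam : {l : Fin N → ℕ // Antitone l} =>
      schurExpansionTerm N t k x y lam.1) S := hsum'.hasSum
  set u : (Fin N → ℕ) → ℂ := fun n =>
    if (∀ i j : Fin N, i < j → n j < n i) then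
      (Vx⁻¹ * Vy⁻¹) * ((∏ i, c (n i))
        * Matrix.det (Matrix.of fun i j : Fin N => (x i : ℂ) ^ (n j))
        * Matrix.det (Matrix.of fun i j : Fin N => (y i : ℂ) ^ (n j)))
    else 0 with hudef
  set emb : {l : Fin N → ℕ // Antitone l} → (Fin N → ℕ) :=
    fun lam => (fun j => lam.1 j + (N - 1 - (j : ℕ))) with hembdef
  have hue : u ∘ emb = (fun lam : {l : Fin N → ℕ // Antitone l} =>
      schurExpansionTerm N t k x y lam.1) := by
    funext lam
    have hanti := lam.2
    have hsa : ∀ i j : Fin N, i < j → emb lam j < emb lam i := by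
      intro i j hij
      have h1 : lam.1 j ≤ lam.1 i := hanti hij.le
      have h2 := j.isLt
      have h3 := Fin.lt_def.mp hij
      simp only [hembdef]
      omega
    simp only [Function.comp_apply, hudef, hembdef, if_pos (by exact hsa)]
    unfold schurExpansionTerm schurPoly
    have hcprod : (∏ i, c ((fun j => lam.1 j + (N - 1 - (j : ℕ))) i))
        = ∏ i : Fin N, (1 - (t : ℂ) ^ (k + lam.1 i + (N - (i : ℕ)))) := by
      refine Finset.prod_congr rfl fun i _ => ?_
      have hieq : k + 1 + (lam.1 i + (N - 1 - (i : ℕ))) = k + lam.1 i + (N - (i : ℕ)) := by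
        have := i.isLt
        omega
      rw [hcdef]
      show 1 - (t : ℂ) ^ (k + 1 + (lam.1 i + (N - 1 - (i : ℕ)))) = _
      rw [hieq]
    rw [hcprod, ← hVxdef, ← hVydef, div_eq_mul_inv, div_eq_mul_inv]
    rw [if_pos (show ∀ i j : Fin N, i < j → lam.1 j + (N - 1 - (j : ℕ)) < lam.1 i + (N - 1 - (i : ℕ)) from hsa)]
    ring
  have hrange : ∀ n : Fin N → ℕ, n ∉ Set.range emb → u n = 0 := by
    intro n hn
    by_contra h
    have hsa : ∀ i j : Fin N, i < j → n j < n i := by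
      by_contra hq
      rw [hudef] at h
      exact h (if_neg hq)
    apply hn
    have hstrict : StrictAnti n := fun a b hab => hsa a b hab
    have hge : ∀ j : Fin N, N - 1 - (j : ℕ) ≤ n j := by
      intro j
      have hlast : j ≤ (⟨N - 1, by omega⟩ : Fin N) := by
        rw [Fin.le_def]
        have := j.isLt
        simp only []
        omega
      have := strictAnti_add_le hstrict j ⟨N - 1, by omega⟩ hlast
      simp only [] at this
      omega
    refine ⟨⟨fun j => n j - (N - 1 - (j : ℕ)), ?_⟩, ?_⟩
    · intro a b hab
      have h1 := strictAnti_add_le hstrict a b hab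
      have h2 := hge b
      have h3 := hge a
      have h4 := Fin.le_def.mp hab
      have h5 := a.isLt
      have h6 := b.isLt
      simp only []
      omega
    · funext j
      simp only [hembdef]
      have := hge j
      omega
  have hu : HasSum u S := by
    rw [← hinj.hasSum_iff hrange]
    show HasSum (u ∘ emb) S
    rw [hue]
    exact hS
  have hGtop : Tendsto (fun M : ℕ => Fintype.piFinset fun _ : Fin N => Finset.range M)
      atTop atTop := by
    apply Filter.tendsto_atTop_finset_of_monotone
    · exact fun a b hab => Fintype.piFinset_subset _ _ fun _ => Finset.range_subset_range.mpr hab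
    · intro n
      refine ⟨(Finset.univ.sup n) + 1, Fintype.mem_piFinset.mpr fun j => Finset.mem_range.mpr ?_⟩
      exact Nat.lt_succ_of_le (Finset.le_sup (Finset.mem_univ j))
  have hpart : Tendsto (fun M : ℕ =>
      ∑ n ∈ Fintype.piFinset fun _ : Fin N => Finset.range M, u n) atTop (𝓝 S) :=
    hu.comp hGtop
  have hdetM : ∀ M : ℕ,
      (∑ n ∈ Fintype.piFinset fun _ : Fin N => Finset.range M, u n)
      = (Vx⁻¹ * Vy⁻¹) * Matrix.det (Matrix.of fun i j : Fin N =>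
          ∑ n ∈ Finset.range M, c n * (x i : ℂ) ^ n * (y j : ℂ) ^ n) := by
    intro M
    rw [det_sum_expand N c (fun i => (x i : ℂ)) (fun i => (y i : ℂ)) M, Finset.mul_sum,
      Finset.sum_filter]
  have hA : ∀ i j : Fin N, HasSum (fun n : ℕ => c n * (x i : ℂ) ^ n * (y j : ℂ) ^ n)
      ((1 - (t : ℂ) ^ (k + 1) - (t : ℂ) * (1 - (t : ℂ) ^ k) * (x i : ℂ) * (y j : ℂ)) /
        ((1 - (x i : ℂ) * (y j : ℂ)) * (1 - (t : ℂ) * (x i : ℂ) * (y j : ℂ)))) := by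
    intro i j
    have hna : ‖(x i : ℂ) * (y j : ℂ)‖ < 1 := by
      rw [norm_mul, Complex.norm_real, Complex.norm_real, Real.norm_eq_abs, Real.norm_eq_abs,
        abs_of_nonneg (hx0 i).le, abs_of_nonneg (hy0 j).le]
      nlinarith [mul_lt_mul_of_pos_right (hx1 i) (hy0 j), hy1 j, hy0 j]
    have hnb : ‖(t : ℂ) * ((x i : ℂ) * (y j : ℂ))‖ < 1 := by
      rw [norm_mul, norm_mul, Complex.norm_real, Complex.norm_real, Complex.norm_real,
        Real.norm_eq_abs, Real.norm_eq_abs, Real.norm_eq_abs,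
        abs_of_nonneg ht0.le, abs_of_nonneg (hx0 i).le, abs_of_nonneg (hy0 j).le]
      nlinarith [mul_lt_mul_of_pos_right (hx1 i) (hy0 j), hy1 j, hy0 j,
        mul_lt_mul_of_pos_right ht1 (mul_pos (hx0 i) (hy0 j)), mul_pos (hx0 i) (hy0 j)]
    have hker := hasSum_kernel k (t : ℂ) ((x i : ℂ) * (y j : ℂ)) hna hnb
    have hfun : (fun n : ℕ => (1 - (t : ℂ) ^ (k + 1 + n)) * ((x i : ℂ) * (y j : ℂ)) ^ n)
        = fun n : ℕ => c n * (x i : ℂ) ^ n * (y j : ℂ) ^ n := by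
      funext n
      rw [hcdef, mul_pow]
      ring
    have hval : (1 - (t : ℂ) ^ (k + 1) - (t : ℂ) * (1 - (t : ℂ) ^ k) * ((x i : ℂ) * (y j : ℂ)))
          / ((1 - (x i : ℂ) * (y j : ℂ)) * (1 - (t : ℂ) * ((x i : ℂ) * (y j : ℂ))))
        = (1 - (t : ℂ) ^ (k + 1) - (t : ℂ) * (1 - (t : ℂ) ^ k) * (x i : ℂ) * (y j : ℂ)) /
          ((1 - (x i : ℂ) * (y j : ℂ)) * (1 - (t : ℂ) * (x i : ℂ) * (y j : ℂ))) := by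
      rw [mul_assoc, mul_assoc]
      ring_nf
    rw [hfun, hval] at hker
    exact hker
  have hdetconv : Tendsto (fun M : ℕ => Matrix.det (Matrix.of fun i j : Fin N =>
      ∑ n ∈ Finset.range M, c n * (x i : ℂ) ^ n * (y j : ℂ) ^ n)) atTop
      (𝓝 (Matrix.det (Matrix.of fun i j : Fin N =>
        (1 - (t : ℂ) ^ (k + 1) - (t : ℂ) * (1 - (t : ℂ) ^ k) * (x i : ℂ) * (y j : ℂ)) /
          ((1 - (x i : ℂ) * (y j : ℂ)) * (1 - (t : ℂ) * (x i : ℂ) * (y j : ℂ)))))) := by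
    simp only [Matrix.det_apply']
    apply tendsto_finset_sum
    intro σ _
    apply Filter.Tendsto.const_mul
    apply tendsto_finset_prod
    intro i _
    simp only [Matrix.of_apply]
    exact (hA (σ i) i).tendsto_sum_nat
  have hfinal : Tendsto (fun M : ℕ => (Vx⁻¹ * Vy⁻¹) * Matrix.det (Matrix.of fun i j : Fin N =>
      ∑ n ∈ Finset.range M, c n * (x i : ℂ) ^ n * (y j : ℂ) ^ n)) atTop
      (𝓝 ((Vx⁻¹ * Vy⁻¹) * Matrix.det (Matrix.of fun i j : Fin N =>
        (1 - (t : ℂ) ^ (k + 1) - (t : ℂ) * (1 - (t : ℂ) ^ k) * (x i : ℂ) * (y j : ℂ)) /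
          ((1 - (x i : ℂ) * (y j : ℂ)) * (1 - (t : ℂ) * (x i : ℂ) * (y j : ℂ)))))) :=
    hdetconv.const_mul _
  have hpart' : Tendsto (fun M : ℕ => (Vx⁻¹ * Vy⁻¹) * Matrix.det (Matrix.of fun i j : Fin N =>
      ∑ n ∈ Finset.range M, c n * (x i : ℂ) ^ n * (y j : ℂ) ^ n)) atTop (𝓝 S) := by
    have := funext hdetM
    rw [← this]
    exact hpart
  have hend := tendsto_nhds_unique hpart' hfinal
  have hP : (∏ i : Fin N, ∏ j ∈ Finset.Ioi i,
      (((x i : ℂ) - (x j : ℂ))⁻¹ * ((y i : ℂ) - (y j : ℂ))⁻¹)) = Vx⁻¹ * Vy⁻¹ := by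
    rw [hVxdef, hVydef]
    simp only [Finset.prod_mul_distrib, ← Finset.prod_inv_distrib]
  rw [hP]
  exact hend.symm
end

section
/- Let t ∈ (0,1) and let ζ ∈ ℂ satisfy ζ ≠ −t^{−m} for every integer m. Let λ be a partition with ℓ = ℓ(λ) nonzero parts and conjugate λ'. Then the infinite products ∏_{j=0}^{∞}(1 + ζ t^{j−ℓ}) and ∏_{j=1}^{∞}(1 + ζ t^{j−λ'_j−1}) converge to nonzero values, and ∏_{j=1}^{ℓ}(1 + ζ t^{λ_j−j}) · (∏_{j=0}^{∞}(1 + ζ t^{j−ℓ}))^{−1} = ∏_{j=1}^{∞} (1 + ζ t^{j−λ'_j−1})^{−1}. -/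
open Filter Finset

/-- The purely algebraic finite identity at the heart of the theorem:
for any function `g : ℤ → ℂ` and any partition `lam` with `ℓ` nonzero parts and `N ≥ lam 0`,
`∏_{j<ℓ} g(λ_{j+1} - (j+1)) * ∏_{j<N} g(j - λ'_{j+1}) = ∏_{j<N+ℓ} g(j - ℓ)`. -/
private lemma key_prod_aux (g : ℤ → ℂ) :
    ∀ (ℓ : ℕ) (lam : ℕ → ℕ), Antitone lam → (∀ n, lam n ≠ 0 ↔ n < ℓ) →
      ∀ N : ℕ, lam 0 ≤ N →
      (∏ j ∈ Finset.range ℓ, g ((lam j : ℤ) - ((j : ℤ) + 1))) *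
        ∏ j ∈ Finset.range N,
          g ((j : ℤ) - ((((Finset.range ℓ).filter fun m => j + 1 ≤ lam m).card : ℕ) : ℤ)) =
      ∏ j ∈ Finset.range (N + ℓ), g ((j : ℤ) - (ℓ : ℤ)) := by
  intro ℓ
  induction ℓ with
  | zero =>
    intro lam hanti hℓ N hN
    simp
  | succ ℓ IH =>
    intro lam hanti hℓ N hN
    have hk1 : 1 ≤ lam ℓ := Nat.one_le_iff_ne_zero.mpr ((hℓ ℓ).mpr (Nat.lt_succ_self ℓ))
    set k := lam ℓ with hkdef
    have hkN : k ≤ N := le_trans (hanti (Nat.zero_le ℓ)) hN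
    have hkle : ∀ m, m ≤ ℓ → k ≤ lam m := fun m hm => hanti hm
    set μ : ℕ → ℕ := fun n => if n < ℓ then lam n else 0 with hμ
    have hμa : Antitone μ := by
      intro a b hab
      by_cases hb : b < ℓ
      · have ha : a < ℓ := lt_of_le_of_lt hab hb
        simpa [hμ, ha, hb] using hanti hab
      · simp [hμ, hb]
    have hμℓ : ∀ n, μ n ≠ 0 ↔ n < ℓ := by
      intro n
      by_cases hn : n < ℓ
      · simp only [hμ, if_pos hn]
        exact ⟨fun _ => hn, fun _ => (hℓ n).mpr (Nat.lt_succ_of_lt hn)⟩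
      · simp [hμ, hn]
    have hμ0 : μ 0 ≤ N := by
      have h : μ 0 ≤ lam 0 := by
        by_cases h : 0 < ℓ <;> simp [hμ, h]
      exact le_trans h hN
    have hIH := IH μ hμa hμℓ N hμ0
    -- card computations
    have hcl : ∀ j, j < k →
        (((Finset.range (ℓ + 1)).filter fun m => j + 1 ≤ lam m).card) = ℓ + 1 := by
      intro j hj
      rw [Finset.filter_true_of_mem, Finset.card_range]
      intro m hm
      rw [Finset.mem_range] at hm
      exact le_trans hj (hkle m (Nat.lt_succ_iff.mp hm))
    have hcm : ∀ j, j < k →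
        (((Finset.range ℓ).filter fun m => j + 1 ≤ μ m).card) = ℓ := by
      intro j hj
      rw [Finset.filter_true_of_mem, Finset.card_range]
      intro m hm
      rw [Finset.mem_range] at hm
      have hmm : μ m = lam m := by simp [hμ, hm]
      rw [hmm]
      exact le_trans hj (hkle m (le_of_lt hm))
    have hceq : ∀ j, k ≤ j →
        ((Finset.range (ℓ + 1)).filter fun m => j + 1 ≤ lam m) =
        ((Finset.range ℓ).filter fun m => j + 1 ≤ μ m) := by
      intro j hj
      ext m
      simp only [Finset.mem_filter, Finset.mem_range, hμ]
      constructor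
      · rintro ⟨hm1, hm2⟩
        have hmℓ : m < ℓ := by
          rcases Nat.lt_succ_iff_lt_or_eq.mp hm1 with h | h
          · exact h
          · subst h; omega
        refine ⟨hmℓ, ?_⟩
        rw [if_pos hmℓ]
        exact hm2
      · rintro ⟨hm1, hm2⟩
        rw [if_pos hm1] at hm2
        exact ⟨Nat.lt_succ_of_lt hm1, hm2⟩
    -- rewrite the four products
    have e1 : (∏ j ∈ Finset.range (ℓ + 1), g ((lam j : ℤ) - ((j : ℤ) + 1)))
        = (∏ j ∈ Finset.range ℓ, g ((μ j : ℤ) - ((j : ℤ) + 1))) * g ((k : ℤ) - ((ℓ : ℤ) + 1)) := by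
      rw [Finset.prod_range_succ]
      congr 1
      refine Finset.prod_congr rfl fun j hj => ?_
      rw [Finset.mem_range] at hj
      simp [hμ, hj]
    have e2 : (∏ j ∈ Finset.range N,
          g ((j : ℤ) - ((((Finset.range (ℓ + 1)).filter fun m => j + 1 ≤ lam m).card : ℕ) : ℤ)))
        = (∏ j ∈ Finset.range k, g ((j : ℤ) - ((ℓ : ℤ) + 1))) *
          ∏ j ∈ Finset.Ico k N,
            g ((j : ℤ) - ((((Finset.range ℓ).filter fun m => j + 1 ≤ μ m).card : ℕ) : ℤ)) := by
      rw [← Finset.prod_range_mul_prod_Ico _ hkN]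
      congr 1
      · refine Finset.prod_congr rfl fun j hj => ?_
        rw [Finset.mem_range] at hj
        rw [hcl j hj]
        congr 1 <;> (try push_cast) <;> (try ring)
      · refine Finset.prod_congr rfl fun j hj => ?_
        rw [Finset.mem_Ico] at hj
        rw [hceq j hj.1]
    have e3 : (∏ j ∈ Finset.range N,
          g ((j : ℤ) - ((((Finset.range ℓ).filter fun m => j + 1 ≤ μ m).card : ℕ) : ℤ)))
        = (∏ j ∈ Finset.range k, g ((j : ℤ) - (ℓ : ℤ))) *
          ∏ j ∈ Finset.Ico k N,
            g ((j : ℤ) - ((((Finset.range ℓ).filter fun m => j + 1 ≤ μ m).card : ℕ) : ℤ)) := by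
      rw [← Finset.prod_range_mul_prod_Ico _ hkN]
      congr 1
      refine Finset.prod_congr rfl fun j hj => ?_
      rw [Finset.mem_range] at hj
      rw [hcm j hj]
    have shift : ∀ M : ℕ, (∏ j ∈ Finset.range (M + 1), g ((j : ℤ) - ((ℓ : ℤ) + 1)))
        = g (-((ℓ : ℤ) + 1)) * ∏ j ∈ Finset.range M, g ((j : ℤ) - (ℓ : ℤ)) := by
      intro M
      rw [Finset.prod_range_succ']
      have h0 : ((0 : ℕ) : ℤ) - ((ℓ : ℤ) + 1) = -((ℓ : ℤ) + 1) := by push_cast; ring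
      rw [h0, mul_comm]
      congr 1
      refine Finset.prod_congr rfl fun j _ => ?_
      have hstep : (((j + 1 : ℕ)) : ℤ) - ((ℓ : ℤ) + 1) = (j : ℤ) - (ℓ : ℤ) := by push_cast; ring
      rw [hstep]
    have e4 : (∏ j ∈ Finset.range (N + (ℓ + 1)), g ((j : ℤ) - ((ℓ : ℤ) + 1)))
        = g (-((ℓ : ℤ) + 1)) * ∏ j ∈ Finset.range (N + ℓ), g ((j : ℤ) - (ℓ : ℤ)) := by
      have hNe : N + (ℓ + 1) = (N + ℓ) + 1 := rfl
      rw [hNe]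
      exact shift (N + ℓ)
    have e5 : g ((k : ℤ) - ((ℓ : ℤ) + 1)) * ∏ j ∈ Finset.range k, g ((j : ℤ) - ((ℓ : ℤ) + 1))
        = g (-((ℓ : ℤ) + 1)) * ∏ j ∈ Finset.range k, g ((j : ℤ) - (ℓ : ℤ)) := by
      rw [← shift k, Finset.prod_range_succ, mul_comm]
    rw [e1, e2]
    have hR : (∏ j ∈ Finset.range (N + (ℓ + 1)), g ((j : ℤ) - ((ℓ + 1 : ℕ) : ℤ)))
        = ∏ j ∈ Finset.range (N + (ℓ + 1)), g ((j : ℤ) - ((ℓ : ℤ) + 1)) := by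
      refine Finset.prod_congr rfl fun j _ => ?_
      congr 1 <;> (try push_cast) <;> (try ring)
    rw [hR, e4, ← hIH, e3]
    linear_combination ((∏ j ∈ Finset.range ℓ, g ((μ j : ℤ) - ((j : ℤ) + 1))) *
      ∏ j ∈ Finset.Ico k N,
        g ((j : ℤ) - ((((Finset.range ℓ).filter fun m => j + 1 ≤ μ m).card : ℕ) : ℤ))) * e5

private lemma aux_mult (t : ℝ) (ht0 : 0 < t) (ht1 : t < 1) (ζ : ℂ)
    (hne : ∀ n : ℤ, 1 + ζ * (t : ℂ) ^ n ≠ 0) (e : ℕ → ℤ) (L : ℤ)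
    (he : ∀ j : ℕ, (j : ℤ) - L ≤ e j) :
    Multipliable (fun j : ℕ => 1 + ζ * (t : ℂ) ^ (e j)) ∧
      (∏' j : ℕ, (1 + ζ * (t : ℂ) ^ (e j))) ≠ 0 := by
  have htne : (t : ℂ) ≠ 0 := by
    exact_mod_cast ht0.ne'
  have hnorm : ∀ j : ℕ, ‖ζ * (t : ℂ) ^ (e j)‖ = ‖ζ‖ * t ^ (e j) := by
    intro j
    rw [norm_mul, norm_zpow, Complex.norm_real, Real.norm_eq_abs, abs_of_pos ht0]
  have hb : ∀ j : ℕ, ‖ζ * (t : ℂ) ^ (e j)‖ ≤ (‖ζ‖ * t ^ (-L)) * t ^ j := by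
    intro j
    rw [hnorm j]
    have h1 : t ^ (e j) ≤ t ^ ((j : ℤ) - L) :=
      zpow_le_zpow_right_of_le_one₀ ht0 ht1.le (he j)
    have h2 : t ^ ((j : ℤ) - L) = t ^ (-L) * t ^ j := by
      rw [sub_eq_add_neg, add_comm, zpow_add₀ ht0.ne', zpow_natCast]
    calc ‖ζ‖ * t ^ (e j) ≤ ‖ζ‖ * t ^ ((j : ℤ) - L) :=
          mul_le_mul_of_nonneg_left h1 (norm_nonneg ζ)
      _ = (‖ζ‖ * t ^ (-L)) * t ^ j := by rw [h2]; ring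
  have htend : Tendsto (fun j : ℕ => (‖ζ‖ * t ^ (-L)) * t ^ j) atTop (nhds 0) := by
    simpa using (tendsto_pow_atTop_nhds_zero_of_lt_one ht0.le ht1).const_mul (‖ζ‖ * t ^ (-L))
  have hev : ∀ᶠ j in atTop, ‖ζ * (t : ℂ) ^ (e j)‖ ≤ 1 / 2 := by
    filter_upwards [htend.eventually_lt_const (show (0 : ℝ) < 1 / 2 by norm_num)] with j hj
    exact le_trans (hb j) hj.le
  have hsum : Summable fun j : ℕ => Complex.log (1 + ζ * (t : ℂ) ^ (e j)) := by
    apply Summable.of_norm_bounded_eventually_nat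
      (g := fun j : ℕ => (3 / 2) * ((‖ζ‖ * t ^ (-L)) * t ^ j))
    · exact ((summable_geometric_of_lt_one ht0.le ht1).mul_left (‖ζ‖ * t ^ (-L))).mul_left (3 / 2)
    · filter_upwards [hev] with j hj
      calc ‖Complex.log (1 + ζ * (t : ℂ) ^ (e j))‖ ≤ 3 / 2 * ‖ζ * (t : ℂ) ^ (e j)‖ :=
            Complex.norm_log_one_add_half_le_self hj
        _ ≤ 3 / 2 * ((‖ζ‖ * t ^ (-L)) * t ^ j) :=
            mul_le_mul_of_nonneg_left (hb j) (by norm_num)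
  have hfun : (Complex.exp ∘ fun j : ℕ => Complex.log (1 + ζ * (t : ℂ) ^ (e j)))
      = fun j : ℕ => 1 + ζ * (t : ℂ) ^ (e j) :=
    funext fun j => Complex.exp_log (hne (e j))
  have hp := hsum.hasSum.cexp
  rw [hfun] at hp
  refine ⟨hp.multipliable, ?_⟩
  rw [hp.tprod_eq]
  exact Complex.exp_ne_zero _

/-- Let `t ∈ (0,1)` and `ζ ∈ ℂ` with `ζ ≠ -t^{-m}` for every integer `m`.
Let `λ` be a partition (zero-indexed: `lam n` is `λ_{n+1}`) with `ℓ` nonzero parts and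
conjugate `λ'_j = #{i ≥ 1 : λ_i ≥ j}`.  Then `∏_{j=0}^∞ (1 + ζ t^{j-ℓ})` and
`∏_{j=1}^∞ (1 + ζ t^{j-λ'_j-1})` converge to nonzero values, and
`∏_{j=1}^ℓ (1 + ζ t^{λ_j-j}) · (∏_{j=0}^∞ (1 + ζ t^{j-ℓ}))⁻¹
  = (∏_{j=1}^∞ (1 + ζ t^{j-λ'_j-1}))⁻¹`. -/
theorem partition_product_identity (t : ℝ) (ht0 : 0 < t) (ht1 : t < 1) (ζ : ℂ)
    (hζ : ∀ m : ℤ, ζ ≠ -(t : ℂ) ^ (-m)) (lam : ℕ → ℕ) (hanti : Antitone lam) (ℓ : ℕ)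
    (hℓ : ∀ n : ℕ, lam n ≠ 0 ↔ n < ℓ) :
    Multipliable (fun j : ℕ => 1 + ζ * (t : ℂ) ^ ((j : ℤ) - (ℓ : ℤ))) ∧
    (∏' j : ℕ, (1 + ζ * (t : ℂ) ^ ((j : ℤ) - (ℓ : ℤ)))) ≠ 0 ∧
    Multipliable (fun j : ℕ =>
      1 + ζ * (t : ℂ) ^ ((j : ℤ) - (Nat.card {m : ℕ | j + 1 ≤ lam m} : ℤ))) ∧
    (∏' j : ℕ, (1 + ζ * (t : ℂ) ^ ((j : ℤ) - (Nat.card {m : ℕ | j + 1 ≤ lam m} : ℤ)))) ≠ 0 ∧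
    (∏ j ∈ Finset.range ℓ, (1 + ζ * (t : ℂ) ^ ((lam j : ℤ) - ((j : ℤ) + 1)))) *
        (∏' j : ℕ, (1 + ζ * (t : ℂ) ^ ((j : ℤ) - (ℓ : ℤ))))⁻¹ =
      (∏' j : ℕ,
        (1 + ζ * (t : ℂ) ^ ((j : ℤ) - (Nat.card {m : ℕ | j + 1 ≤ lam m} : ℤ))))⁻¹ := by
  have htne : (t : ℂ) ≠ 0 := by exact_mod_cast ht0.ne'
  have hne : ∀ n : ℤ, 1 + ζ * (t : ℂ) ^ n ≠ 0 := by
    intro n h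
    apply hζ n
    have hpow : (t : ℂ) ^ n ≠ 0 := zpow_ne_zero n htne
    have hz : ζ = (-1) / (t : ℂ) ^ n := by
      rw [eq_div_iff hpow]
      linear_combination h
    rw [hz, zpow_neg]
    ring
  -- identify Nat.card with a Finset card
  have hcard : ∀ j : ℕ, (Nat.card {m : ℕ | j + 1 ≤ lam m} : ℤ)
      = ((((Finset.range ℓ).filter fun m => j + 1 ≤ lam m).card : ℕ) : ℤ) := by
    intro j
    congr 1
    have hset : {m : ℕ | j + 1 ≤ lam m}
        = ↑((Finset.range ℓ).filter fun m => j + 1 ≤ lam m) := by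
      ext m
      simp only [Set.mem_setOf_eq, Finset.coe_filter, Finset.mem_range]
      constructor
      · intro h
        exact ⟨(hℓ m).mp (by omega), h⟩
      · exact fun h => h.2
    rw [hset, Nat.card_coe_set_eq, Set.ncard_coe_finset]
  have hcle : ∀ j : ℕ, (((Finset.range ℓ).filter fun m => j + 1 ≤ lam m).card) ≤ ℓ := by
    intro j
    calc ((Finset.range ℓ).filter fun m => j + 1 ≤ lam m).card
        ≤ (Finset.range ℓ).card := Finset.card_filter_le _ _
      _ = ℓ := Finset.card_range ℓ
  set N := lam 0 with hN
  obtain ⟨M1, h1⟩ := aux_mult t ht0 ht1 ζ hne (fun j : ℕ => (j : ℤ) - (ℓ : ℤ)) (ℓ : ℤ)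
    (fun j => le_refl _)
  obtain ⟨M2, h2⟩ := aux_mult t ht0 ht1 ζ hne
    (fun j : ℕ => (j : ℤ) - (Nat.card {m : ℕ | j + 1 ≤ lam m} : ℤ)) (ℓ : ℤ)
    (by
      intro j
      rw [hcard j]
      have hj := hcle j
      have hj2 : ((((Finset.range ℓ).filter fun m => j + 1 ≤ lam m).card : ℕ) : ℤ) ≤ (ℓ : ℤ) := by
        exact_mod_cast hj
      omega)
  obtain ⟨Mt1, _⟩ := aux_mult t ht0 ht1 ζ hne
    (fun j : ℕ => ((j + (N + ℓ) : ℕ) : ℤ) - (ℓ : ℤ)) 0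
    (by intro j; push_cast; omega)
  obtain ⟨Mt2, _⟩ := aux_mult t ht0 ht1 ζ hne
    (fun j : ℕ => ((j + N : ℕ) : ℤ)
      - ((((Finset.range ℓ).filter fun m => j + N + 1 ≤ lam m).card : ℕ) : ℤ)) (ℓ : ℤ)
    (by
      intro j
      have hj := hcle (j + N)
      have hj2 : ((((Finset.range ℓ).filter fun m => j + N + 1 ≤ lam m).card : ℕ) : ℤ)
          ≤ (ℓ : ℤ) := by
        exact_mod_cast hj
      push_cast
      omega)
  refine ⟨M1, h1, M2, h2, ?_⟩
  simp only [hcard]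
  -- tail product
  set T := ∏' i : ℕ, (1 + ζ * (t : ℂ) ^ (((i + N : ℕ) : ℤ))) with hT
  have hs1 : (∏' j : ℕ, (1 + ζ * (t : ℂ) ^ ((j : ℤ) - (ℓ : ℤ))))
      = (∏ j ∈ Finset.range (N + ℓ), (1 + ζ * (t : ℂ) ^ ((j : ℤ) - (ℓ : ℤ)))) * T := by
    rw [← Multipliable.prod_mul_tprod_nat_mul'
      (f := fun j : ℕ => 1 + ζ * (t : ℂ) ^ ((j : ℤ) - (ℓ : ℤ))) (k := N + ℓ) Mt1]
    congr 1
    refine tprod_congr fun i => ?_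
    have hexp : ((i + (N + ℓ) : ℕ) : ℤ) - (ℓ : ℤ) = ((i + N : ℕ) : ℤ) := by push_cast; ring
    rw [hexp]
  have hs2 : (∏' j : ℕ, (1 + ζ * (t : ℂ) ^ ((j : ℤ)
        - ((((Finset.range ℓ).filter fun m => j + 1 ≤ lam m).card : ℕ) : ℤ))))
      = (∏ j ∈ Finset.range N, (1 + ζ * (t : ℂ) ^ ((j : ℤ)
          - ((((Finset.range ℓ).filter fun m => j + 1 ≤ lam m).card : ℕ) : ℤ)))) * T := by
    rw [← Multipliable.prod_mul_tprod_nat_mul'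
      (f := fun j : ℕ => 1 + ζ * (t : ℂ) ^ ((j : ℤ)
        - ((((Finset.range ℓ).filter fun m => j + 1 ≤ lam m).card : ℕ) : ℤ))) (k := N) Mt2]
    congr 1
    refine tprod_congr fun i => ?_
    have hc0 : ((Finset.range ℓ).filter fun m => i + N + 1 ≤ lam m) = ∅ := by
      apply Finset.filter_false_of_mem
      intro m _
      have hm : lam m ≤ N := hanti (Nat.zero_le m)
      omega
    have hexp : ((i + N : ℕ) : ℤ)
        - ((((Finset.range ℓ).filter fun m => i + N + 1 ≤ lam m).card : ℕ) : ℤ)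
        = ((i + N : ℕ) : ℤ) := by
      rw [hc0]
      simp
    rw [hexp]
  have hfin := key_prod_aux (fun n : ℤ => 1 + ζ * (t : ℂ) ^ n) ℓ lam hanti hℓ N (le_refl N)
  have h2' : (∏ j ∈ Finset.range N, (1 + ζ * (t : ℂ) ^ ((j : ℤ)
      - ((((Finset.range ℓ).filter fun m => j + 1 ≤ lam m).card : ℕ) : ℤ)))) * T ≠ 0 := by
    rw [← hs2]
    simpa only [hcard] using h2
  have h1' : (∏ j ∈ Finset.range (N + ℓ), (1 + ζ * (t : ℂ) ^ ((j : ℤ) - (ℓ : ℤ)))) * T ≠ 0 := by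
    rw [← hs1]
    exact h1
  rw [hs1, hs2]
  have hmain : (∏ j ∈ Finset.range ℓ, (1 + ζ * (t : ℂ) ^ ((lam j : ℤ) - ((j : ℤ) + 1)))) *
      ((∏ j ∈ Finset.range N, (1 + ζ * (t : ℂ) ^ ((j : ℤ)
        - ((((Finset.range ℓ).filter fun m => j + 1 ≤ lam m).card : ℕ) : ℤ)))) * T)
      = (∏ j ∈ Finset.range (N + ℓ), (1 + ζ * (t : ℂ) ^ ((j : ℤ) - (ℓ : ℤ)))) * T := by
    linear_combination T * hfin
  have hA : (∏ j ∈ Finset.range ℓ, (1 + ζ * (t : ℂ) ^ ((lam j : ℤ) - ((j : ℤ) + 1)))) ≠ 0 :=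
    (mul_ne_zero_iff.mp (hmain.symm ▸ h1')).1
  rw [← hmain, mul_inv, ← mul_assoc, mul_inv_cancel₀ hA, one_mul]
end

section
/- For every complex number w, lim_{t→1⁻} ∏_{j=0}^{∞} (1 + (1−t) t^j w) = e^{w}, where the limit is over real t increasing to 1 and the infinite product converges absolutely for each t ∈ (0,1). -/
open Filter Finset

/-- Summability of the terms for fixed `t ∈ (0,1)`. -/
lemma aux_summable (w : ℂ) {t : ℝ} (ht0 : 0 < t) (ht1 : t < 1) :
    Summable (fun j : ℕ => ‖(1 - (t : ℂ)) * (t : ℂ) ^ j * w‖) := by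
  have hg : Summable (fun j : ℕ => t ^ j) :=
    summable_geometric_of_lt_one ht0.le ht1
  have := (hg.mul_left ‖(1 - (t : ℂ))‖).mul_right ‖w‖
  refine this.congr fun j => ?_
  rw [norm_mul, norm_mul, norm_pow, Complex.norm_real, Real.norm_of_nonneg ht0.le]

lemma aux_norm (w : ℂ) {t : ℝ} (ht0 : 0 < t) (ht1 : t < 1) (j : ℕ) :
    ‖(1 - (t : ℂ)) * (t : ℂ) ^ j * w‖ = (1 - t) * t ^ j * ‖w‖ := by
  have h1 : ‖((t:ℂ))‖ = t := by rw [Complex.norm_real, Real.norm_of_nonneg ht0.le]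
  have h2 : ‖(1 - (t:ℂ))‖ = 1 - t := by
    rw [show (1 - (t:ℂ)) = ((1 - t : ℝ) : ℂ) by push_cast; ring,
      Complex.norm_real, Real.norm_of_nonneg (by linarith)]
  rw [norm_mul, norm_mul, norm_pow, h1, h2]

/-- Key per-`t` facts when `t` is close enough to `1`. -/
lemma aux_key (w : ℂ) {t : ℝ} (ht0 : 0 < t) (ht1 : t < 1)
    (hs : (1 - t) * ‖w‖ ≤ 1 / 2) :
    (∏' j : ℕ, (1 + (1 - (t : ℂ)) * (t : ℂ) ^ j * w)) =
      Complex.exp (∑' j : ℕ, Complex.log (1 + (1 - (t : ℂ)) * (t : ℂ) ^ j * w)) ∧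
    ‖(∑' j : ℕ, Complex.log (1 + (1 - (t : ℂ)) * (t : ℂ) ^ j * w)) - w‖
      ≤ (1 - t) * ‖w‖ ^ 2 := by
  set a : ℕ → ℂ := fun j => (1 - (t : ℂ)) * (t : ℂ) ^ j * w with ha
  have htpow : ∀ j : ℕ, t ^ j ≤ 1 := fun j => pow_le_one₀ ht0.le ht1.le
  have htpow0 : ∀ j : ℕ, 0 ≤ t ^ j := fun j => pow_nonneg ht0.le j
  have hanorm : ∀ j, ‖a j‖ = (1 - t) * t ^ j * ‖w‖ := aux_norm w ht0 ht1
  have hhalf : ∀ j, ‖a j‖ ≤ 1 / 2 := by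
    intro j
    rw [hanorm j]
    calc (1 - t) * t ^ j * ‖w‖ ≤ (1 - t) * 1 * ‖w‖ := by
          have h := htpow j
          nlinarith [mul_nonneg (mul_nonneg (sub_nonneg.2 ht1.le)
            (sub_nonneg.2 h)) (norm_nonneg w)]
      _ ≤ 1 / 2 := by rw [mul_one]; exact hs
  have hlt1 : ∀ j, ‖a j‖ < 1 := fun j => lt_of_le_of_lt (hhalf j) (by norm_num)
  have hne : ∀ j, 1 + a j ≠ 0 := by
    intro j h
    have : ‖a j‖ = 1 := by
      have : a j = -1 := by linear_combination h
      simp [this]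
    linarith [hlt1 j]
  have hsum_norm : Summable (fun j : ℕ => ‖a j‖) := aux_summable w ht0 ht1
  have hsuma : Summable a := hsum_norm.of_norm
  -- bound on the log differences
  have hlogsub : ∀ j, ‖Complex.log (1 + a j) - a j‖ ≤ (1 - t) * ‖w‖ * ‖a j‖ := by
    intro j
    have h1 := Complex.norm_log_one_add_sub_self_le (hlt1 j)
    have h2 : ‖a j‖ ^ 2 * (1 - ‖a j‖)⁻¹ / 2 ≤ ‖a j‖ ^ 2 := by
      have hinv : (1 - ‖a j‖)⁻¹ ≤ 2 := by
        rw [inv_le_comm₀ (by linarith [hhalf j]) (by norm_num)]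
        linarith [hhalf j]
      nlinarith [sq_nonneg ‖a j‖, norm_nonneg (a j)]
    have h3 : ‖a j‖ ^ 2 ≤ (1 - t) * ‖w‖ * ‖a j‖ := by
      have : ‖a j‖ ≤ (1 - t) * ‖w‖ := by
        rw [hanorm j]
        calc (1 - t) * t ^ j * ‖w‖ ≤ (1 - t) * 1 * ‖w‖ := by
              have h := htpow j
              nlinarith [mul_nonneg (mul_nonneg (sub_nonneg.2 ht1.le)
                (sub_nonneg.2 h)) (norm_nonneg w)]
          _ = (1 - t) * ‖w‖ := by ring
      nlinarith [norm_nonneg (a j)]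
    linarith
  have hsumlog : Summable (fun j => Complex.log (1 + a j)) := by
    apply Summable.of_norm_bounded
      (g := fun j => (1 - t) * ‖w‖ * ‖a j‖ + ‖a j‖) ((hsum_norm.mul_left _).add hsum_norm)
    intro j
    calc ‖Complex.log (1 + a j)‖
        ≤ ‖Complex.log (1 + a j) - a j‖ + ‖a j‖ := by
          simpa using norm_add_le (Complex.log (1 + a j) - a j) (a j)
      _ ≤ (1 - t) * ‖w‖ * ‖a j‖ + ‖a j‖ := by linarith [hlogsub j]
  -- product equals exp of sum of logs
  have hprod : HasProd (fun j => 1 + a j)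
      (Complex.exp (∑' j, Complex.log (1 + a j))) := by
    exact (hsumlog.hasSum.cexp).congr_fun fun j => (Complex.exp_log (hne j)).symm
  refine ⟨hprod.tprod_eq, ?_⟩
  -- sum of a j equals w
  have htne : (1 : ℂ) - (t : ℂ) ≠ 0 := by
    intro h
    have : (t : ℂ) = 1 := by linear_combination -h
    have := congrArg Complex.re this
    simp at this
    linarith
  have hsum_a : ∑' j, a j = w := by
    have hgeo : ∑' j : ℕ, (t : ℂ) ^ j = (1 - (t : ℂ))⁻¹ := by
      apply tsum_geometric_of_norm_lt_one
      rw [Complex.norm_real, Real.norm_of_nonneg ht0.le]; exact ht1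
    calc ∑' j, a j = ((1 - (t : ℂ)) * w) * ∑' j : ℕ, (t : ℂ) ^ j := by
          rw [← tsum_mul_left]; exact tsum_congr fun j => by ring
      _ = w := by rw [hgeo]; field_simp
  have hdiff : (∑' j, Complex.log (1 + a j)) - w
      = ∑' j, (Complex.log (1 + a j) - a j) := by
    rw [← hsum_a, ← Summable.tsum_sub hsumlog hsuma]
  rw [hdiff]
  calc ‖∑' j, (Complex.log (1 + a j) - a j)‖
      ≤ ∑' j, ((1 - t) * ‖w‖ * ‖a j‖) :=
        norm_tsum_le_tsum_norm ((hsum_norm.mul_left _).of_nonneg_of_le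
          (fun j => norm_nonneg _) hlogsub) |>.trans
          (Summable.tsum_le_tsum hlogsub
            (((hsum_norm.mul_left _).of_nonneg_of_le (fun j => norm_nonneg _) hlogsub))
            (hsum_norm.mul_left _))
    _ = (1 - t) * ‖w‖ * ∑' j, ‖a j‖ := by rw [tsum_mul_left]
    _ ≤ (1 - t) * ‖w‖ ^ 2 := by
        have : ∑' j, ‖a j‖ = ‖w‖ := by
          have : ∑' j, ‖a j‖ = ((1 - t) * ‖w‖) * ∑' j : ℕ, t ^ j := by
            rw [← tsum_mul_left]; exact tsum_congr fun j => by rw [hanorm j]; ring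
          have h1t : (1:ℝ) - t ≠ 0 := by linarith
          rw [this, tsum_geometric_of_lt_one ht0.le ht1, mul_comm (1 - t) ‖w‖,
            mul_assoc, mul_inv_cancel₀ h1t, mul_one]
        rw [this]; nlinarith [norm_nonneg w]

/-- for every `w ∈ ℂ`, the infinite product `∏_{j=0}^∞ (1 + (1-t)t^j w)`
converges absolutely for each `t ∈ (0,1)`, and tends to `e^w` as `t → 1⁻`. -/
theorem prod_tendsto_exp (w : ℂ) :
    (∀ t : ℝ, 0 < t → t < 1 →
      Summable (fun j : ℕ => ‖(1 - (t : ℂ)) * (t : ℂ) ^ j * w‖)) ∧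
    Filter.Tendsto (fun t : ℝ => ∏' j : ℕ, (1 + (1 - (t : ℂ)) * (t : ℂ) ^ j * w))
      (nhdsWithin 1 (Set.Iio 1)) (nhds (Complex.exp w)) := by
  refine ⟨fun t ht0 ht1 => aux_summable w ht0 ht1, ?_⟩
  set t₀ : ℝ := max (1 / 2) (1 - 1 / (2 * (‖w‖ + 1))) with ht₀
  have hw1 : 0 < ‖w‖ + 1 := by positivity
  have ht₀lt : t₀ < 1 := by
    apply max_lt (by norm_num)
    have : 0 < 1 / (2 * (‖w‖ + 1)) := by positivity
    linarith
  have hmem : Set.Ioo t₀ 1 ∈ nhdsWithin (1:ℝ) (Set.Iio 1) :=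
    Ioo_mem_nhdsLT_of_mem ⟨ht₀lt, le_refl 1⟩
  have hgood : ∀ t ∈ Set.Ioo t₀ 1, 0 < t ∧ t < 1 ∧ (1 - t) * ‖w‖ ≤ 1 / 2 := by
    rintro t ⟨h1, h2⟩
    have h0 : (1:ℝ)/2 ≤ t₀ := le_max_left _ _
    have hpos : 0 < t := lt_of_lt_of_le (by norm_num) (h0.trans h1.le)
    refine ⟨hpos, h2, ?_⟩
    have h3 : 1 - 1 / (2 * (‖w‖ + 1)) ≤ t₀ := le_max_right _ _
    have h4 : 1 - t ≤ 1 / (2 * (‖w‖ + 1)) := by linarith [h3.trans h1.le]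
    calc (1 - t) * ‖w‖ ≤ 1 / (2 * (‖w‖ + 1)) * (‖w‖ + 1) := by
          apply mul_le_mul h4 (by linarith) (norm_nonneg w) (by positivity)
      _ = 1 / 2 := by field_simp
  -- the sums of logs tend to w
  set L : ℝ → ℂ := fun t => ∑' j : ℕ, Complex.log (1 + (1 - (t : ℂ)) * (t : ℂ) ^ j * w)
    with hL
  have hLtend : Tendsto L (nhdsWithin 1 (Set.Iio 1)) (nhds w) := by
    have hz : Tendsto (fun t : ℝ => L t - w) (nhdsWithin 1 (Set.Iio 1)) (nhds 0) := by
      apply squeeze_zero_norm' (a := fun t : ℝ => (1 - t) * ‖w‖ ^ 2)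
      · filter_upwards [hmem] with t ht
        obtain ⟨h0, h1, hs⟩ := hgood t ht
        simpa using (aux_key w h0 h1 hs).2
      · have : Tendsto (fun t : ℝ => (1 - t) * ‖w‖ ^ 2) (nhds 1) (nhds ((1 - 1) * ‖w‖ ^ 2)) := by
          apply Tendsto.mul_const
          exact (continuous_const.sub continuous_id).tendsto 1
        simpa using this.mono_left nhdsWithin_le_nhds
    simpa using hz.add_const w
  have := (Complex.continuous_exp.tendsto w).comp hLtend
  apply this.congr'
  filter_upwards [hmem] with t ht
  obtain ⟨h0, h1, hs⟩ := hgood t ht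
  exact ((aux_key w h0 h1 hs).1).symm
end

section
/- Let N ≥ 1 and k ≥ 0 be integers, t ∈ ℂ, and x₁,…,x_N, y₁,…,y_N ∈ ℂ nonzero. Let j₁,…,j_N ∈ {0,1} and i₁,…,i_N ∈ {0,1}, and set J₀ = I₀ = 0, J_a = Σ_{b=1}^{a} j_b and I_a = a − Σ_{b=1}^{a} i_b for 1 ≤ a ≤ N. If J_N = I_N, then ∏_{a=1}^{N} [𝓛_{1/x_a}(k+J_{a−1}, j_a; k+J_a, 0) · 𝓛_{y_a}(k+I_a, i_a; k+I_{a−1}, 1)] = ∏_{a=1}^{N} y_a · ∏_{b=1}^{J_N} (1 − t^{k+b}). -/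
open Filter Finset

/-- The t-boson vertex weights `𝓛_x(i₁, j₁; i₂, j₂)` for `j₁, j₂ ∈ {0,1}`:
`𝓛_x(i,0;i,0) = 1`, `𝓛_x(i,0;i-1,1) = x(1-t^i)`, `𝓛_x(i,1;i+1,0) = 1`,
`𝓛_x(i,1;i,1) = x`, and `0` if `i₁ + j₁ ≠ i₂ + j₂`. -/
noncomputable def Lboson {K : Type*} [Field K] (t x : K) (i1 j1 i2 j2 : ℕ) : K :=
  if i1 + j1 = i2 + j2 then
    if j1 = 0 ∧ j2 = 0 then 1
    else if j1 = 0 ∧ j2 = 1 then x * (1 - t ^ i1)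
    else if j1 = 1 ∧ j2 = 0 then 1
    else if j1 = 1 ∧ j2 = 1 then x
    else 0
  else 0

lemma boson_first (t xa : ℂ) (k S ja : ℕ) (hja : ja ≤ 1) :
    Lboson t xa (k + S) ja (k + (S + ja)) 0 = 1 := by
  interval_cases ja <;> simp [Lboson] <;> omega

lemma boson_second (k : ℕ) (t : ℂ) (y : ℕ → ℂ) (i : ℕ → ℕ) :
    ∀ N, (∀ b < N, i b ≤ 1) →
    ∏ a ∈ Finset.range N,
        Lboson t (y a) (k + (a + 1 - ∑ b ∈ Finset.range (a + 1), i b)) (i a)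
            (k + (a - ∑ b ∈ Finset.range a, i b)) 1 =
      (∏ a ∈ Finset.range N, y a) *
        ∏ b ∈ Finset.range (N - ∑ b ∈ Finset.range N, i b), (1 - t ^ (k + b + 1)) := by
  intro N
  induction N with
  | zero => simp
  | succ n ih =>
    intro h
    have hS : ∑ b ∈ Finset.range n, i b ≤ n := by
      calc ∑ b ∈ Finset.range n, i b ≤ ∑ b ∈ Finset.range n, 1 :=
            Finset.sum_le_sum (fun b hb => h b (Nat.lt_succ_of_lt (Finset.mem_range.mp hb)))
        _ = n := by simp
    rw [Finset.prod_range_succ, ih (fun b hb => h b (Nat.lt_succ_of_lt hb))]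
    rcases Nat.le_one_iff_eq_zero_or_eq_one.mp (h n (Nat.lt_succ_self n)) with h0 | h1
    · have hsum : ∑ b ∈ Finset.range (n+1), i b = ∑ b ∈ Finset.range n, i b := by
        rw [Finset.sum_range_succ, h0, add_zero]
      set S := ∑ b ∈ Finset.range n, i b with hSdef
      have h1' : n + 1 - S = (n - S) + 1 := by omega
      rw [hsum, h0, h1']
      have hL : Lboson t (y n) (k + ((n - S) + 1)) 0 (k + (n - S)) 1
          = y n * (1 - t ^ (k + (n - S) + 1)) := by
        simp [Lboson]
        ring_nf
        simp
      rw [hL, Finset.prod_range_succ, Finset.prod_range_succ]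
      ring
    · have hsum : ∑ b ∈ Finset.range (n+1), i b = (∑ b ∈ Finset.range n, i b) + 1 := by
        rw [Finset.sum_range_succ, h1]
      set S := ∑ b ∈ Finset.range n, i b with hSdef
      have h1' : n + 1 - (S + 1) = n - S := by omega
      rw [hsum, h1, h1']
      have hL : Lboson t (y n) (k + (n - S)) 1 (k + (n - S)) 1 = y n := by
        simp [Lboson]
      rw [hL, Finset.prod_range_succ]
      ring

/-- evaluation of the tower of t-boson vertices.  With `1`-indexed data
`j_1,…,j_N, i_1,…,i_N ∈ {0,1}` (here zero-indexed as `j b = j_{b+1}`, etc.), partial sums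
`J_a = Σ_{b=1}^a j_b` and `I_a = a - Σ_{b=1}^a i_b`, and `J_N = I_N`, one has
`∏_{a=1}^N 𝓛_{1/x_a}(k+J_{a-1}, j_a; k+J_a, 0) · 𝓛_{y_a}(k+I_a, i_a; k+I_{a-1}, 1)
  = ∏_{a=1}^N y_a · ∏_{b=1}^{J_N} (1 - t^{k+b})`. -/
theorem boson_tower_eval (N : ℕ) (hN : 1 ≤ N) (k : ℕ) (t : ℂ) (x y : ℕ → ℂ)
    (hx : ∀ a < N, x a ≠ 0) (hy : ∀ a < N, y a ≠ 0)
    (j i : ℕ → ℕ) (hj : ∀ b < N, j b ≤ 1) (hi : ∀ b < N, i b ≤ 1)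
    (hJI : ∑ b ∈ Finset.range N, j b = N - ∑ b ∈ Finset.range N, i b) :
    ∏ a ∈ Finset.range N,
        (Lboson t (x a)⁻¹ (k + ∑ b ∈ Finset.range a, j b) (j a)
            (k + ∑ b ∈ Finset.range (a + 1), j b) 0 *
          Lboson t (y a) (k + (a + 1 - ∑ b ∈ Finset.range (a + 1), i b)) (i a)
            (k + (a - ∑ b ∈ Finset.range a, i b)) 1) =
      (∏ a ∈ Finset.range N, y a) *
        ∏ b ∈ Finset.range (∑ b ∈ Finset.range N, j b), (1 - t ^ (k + b + 1)) := by
  rw [Finset.prod_mul_distrib]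
  have h1 : ∏ a ∈ Finset.range N,
      Lboson t (x a)⁻¹ (k + ∑ b ∈ Finset.range a, j b) (j a)
        (k + ∑ b ∈ Finset.range (a + 1), j b) 0 = 1 := by
    apply Finset.prod_eq_one
    intro a ha
    have := boson_first t (x a)⁻¹ k (∑ b ∈ Finset.range a, j b) (j a)
      (hj a (Finset.mem_range.mp ha))
    rwa [← Finset.sum_range_succ] at this
  rw [h1, one_mul, boson_second k t y i N hi, hJI]
end
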